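/- arXiv:2401.13971 — 6 statements merged into one kernel-verified Lean document; each statement's English description precedes it below -/
import Mathlib

section
/- One-step descent under standard Lipschitz continuity: Let ρ > κ + τ and γ > ρ. Let x ∈ ℝⁿ be fixed and let x⁺(ξ) = argmin_y { f_x(y,ξ) + ω(y) + (γ/2)‖y − x‖² } for a sample ξ ∼ Ξ. Then E_ξ[ψ_{1/ρ}(x⁺(ξ))] ≤ ψ_{1/ρ}(x) − (ρ(ρ − τ − κ)/(2(γ − κ)))‖x̂ − x‖² + 2ρL_f²/((γ − ρ)(γ − κ)), where x̂ = prox_{ψ/ρ}(x). -/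
/-!
The model objective `y ↦ f_x(y, ξ) + ω(y) + γ/2 ‖y - x‖²` is `(γ - κ)`-strongly convex, so its
minimizer `x⁺` satisfies a quadratic growth bound when compared with `x̂`. Optimality of `x̂` in the
Moreau envelope trades `ω(x̂) - ω(x⁺)` for `f(x⁺) - f(x̂)`, and Young's inequality absorbs the terms
linear in `‖x⁺ - x‖` coming from the Lipschitz bounds, at the price of `(L_f(ξ)² + L_f²)/(γ - ρ)`.
Since `ψ_{1/ρ}(x⁺) ≤ ψ(x̂) + ρ/2 ‖x̂ - x⁺‖²`, taking expectations and using that the model is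
unbiased at `x` and `τ`-accurate at `x̂` gives the claim.
-/

open MeasureTheory Set Filter Topology

section StrongConvexity

variable {E : Type*} [NormedAddCommGroup E] [NormedSpace ℝ E] {s : Set E} {f g : E → ℝ}
  {m n : ℝ}

lemma StrongConvexOn.add (hf : StrongConvexOn s m f) (hg : StrongConvexOn s n g) :
    StrongConvexOn s (m + n) (f + g) :=
  (UniformConvexOn.add hf hg).mono fun r => le_of_eq <| by simp only [Pi.add_apply]; ring

lemma StrongConvexOn.add_half_mul_norm_sub_sq_le_of_isMinOn {p y : E}
    (hf : StrongConvexOn s m f) (hmin : IsMinOn f s p) (hp : p ∈ s) (hy : y ∈ s) :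
    f p + m / 2 * ‖y - p‖ ^ 2 ≤ f y := by
  have hchord : ∀ t ∈ Ioc (0 : ℝ) 1, f p + (1 - t) * (m / 2 * ‖y - p‖ ^ 2) ≤ f y := by
    rintro t ⟨ht0, ht1⟩
    have hconv := hf.2 hp hy (sub_nonneg.2 ht1) ht0.le (sub_add_cancel 1 t)
    have hle := isMinOn_iff.1 hmin _ (hf.1 hp hy (sub_nonneg.2 ht1) ht0.le (sub_add_cancel 1 t))
    rw [norm_sub_rev] at hconv
    simp only [smul_eq_mul] at hconv
    refine le_of_mul_le_mul_left ?_ ht0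
    linarith
  have hlim : Tendsto (fun t : ℝ => f p + (1 - t) * (m / 2 * ‖y - p‖ ^ 2)) (𝓝[>] 0)
      (𝓝 (f p + m / 2 * ‖y - p‖ ^ 2)) := by
    have hcont : Continuous fun t : ℝ => f p + (1 - t) * (m / 2 * ‖y - p‖ ^ 2) := by fun_prop
    simpa using (hcont.tendsto 0).mono_left nhdsWithin_le_nhds
  exact le_of_tendsto hlim (mem_of_superset (Ioc_mem_nhdsGT one_pos) hchord)

end StrongConvexity

section ModelObjective

variable {E : Type*} [NormedAddCommGroup E] [InnerProductSpace ℝ E]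

lemma strongConvexOn_half_mul_norm_sub_sq {s : Set E} (hs : Convex ℝ s) (m : ℝ) (x : E) :
    StrongConvexOn s m fun y => m / 2 * ‖y - x‖ ^ 2 := by
  rw [strongConvexOn_iff_convex]
  refine (((-m) • innerₛₗ ℝ x).convexOn hs |>.add (convexOn_const (m / 2 * ‖x‖ ^ 2) hs)).congr
    fun y _ => ?_
  simp only [Pi.add_apply, norm_sub_sq_real, LinearMap.smul_apply, innerₛₗ_apply_apply, smul_eq_mul,
    real_inner_comm x y]
  ring

lemma strongConvexOn_model_objective {φ w : E → ℝ} {κ : ℝ} (hφ : ConvexOn ℝ univ φ)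
    (hw : ConvexOn ℝ univ fun y => w y + κ / 2 * ‖y‖ ^ 2) (γ : ℝ) (x : E) :
    StrongConvexOn univ (γ - κ) fun y => φ y + w y + γ / 2 * ‖y - x‖ ^ 2 := by
  have hw' : StrongConvexOn univ (-κ) w := by
    rw [strongConvexOn_iff_convex]
    simpa only [neg_div, neg_mul, sub_neg_eq_add] using hw
  have := ((strongConvexOn_zero.2 hφ).add hw').add
    (strongConvexOn_half_mul_norm_sub_sq convex_univ γ x)
  rwa [zero_add, neg_add_eq_sub] at this

lemma mul_le_sq_div_add_mul_sq (a b : ℝ) {c : ℝ} (hc : 0 < c) :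
    a * b ≤ a ^ 2 / c + c / 4 * b ^ 2 := by
  rw [div_add' _ _ _ hc.ne', le_div_iff₀ hc]
  nlinarith [sq_nonneg (a - c / 2 * b)]

lemma half_mul_norm_sub_update_sq_le {f w φ : E → ℝ} {κ ρ γ L Lf : ℝ} {x xhat xplus : E}
    (hφ : ConvexOn ℝ univ φ) (hw : ConvexOn ℝ univ fun y => w y + κ / 2 * ‖y‖ ^ 2)
    (hργ : ρ < γ)
    (hupdate : ∀ y, φ xplus + w xplus + γ / 2 * ‖xplus - x‖ ^ 2
      ≤ φ y + w y + γ / 2 * ‖y - x‖ ^ 2)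
    (hprox : f xhat + w xhat + ρ / 2 * ‖xhat - x‖ ^ 2
      ≤ f xplus + w xplus + ρ / 2 * ‖xplus - x‖ ^ 2)
    (hφL : φ x - φ xplus ≤ L * ‖xplus - x‖) (hfL : f xplus - f x ≤ Lf * ‖xplus - x‖) :
    (γ - κ) / 2 * ‖xhat - xplus‖ ^ 2
      ≤ (φ xhat - φ x) + (f x - f xhat) + (L ^ 2 + Lf ^ 2) / (γ - ρ)
        + (γ - ρ) / 2 * ‖xhat - x‖ ^ 2 := by
  have hgrowth := (strongConvexOn_model_objective hφ hw γ x).add_half_mul_norm_sub_sq_le_of_isMinOn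
    (isMinOn_univ_iff.2 hupdate) (mem_univ _) (mem_univ xhat)
  have hyoungL := mul_le_sq_div_add_mul_sq L ‖xplus - x‖ (sub_pos.2 hργ)
  have hyoungf := mul_le_sq_div_add_mul_sq Lf ‖xplus - x‖ (sub_pos.2 hργ)
  linarith [add_div (L ^ 2) (Lf ^ 2) (γ - ρ)]

lemma moreau_update_le {f w φ ψ moreau : E → ℝ} {prox : E → E} {κ ρ γ L Lf : ℝ} {x xplus : E}
    (hψ : ∀ y, ψ y = f y + w y) (hφ : ConvexOn ℝ univ φ)
    (hw : ConvexOn ℝ univ fun y => w y + κ / 2 * ‖y‖ ^ 2) (hρ : 0 ≤ ρ) (hκγ : κ < γ) (hργ : ρ < γ)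
    (hprox : ∀ x z, ψ (prox x) + ρ / 2 * ‖prox x - x‖ ^ 2 ≤ ψ z + ρ / 2 * ‖z - x‖ ^ 2)
    (hmoreau : ∀ x, moreau x = ψ (prox x) + ρ / 2 * ‖prox x - x‖ ^ 2)
    (hupdate : ∀ y, φ xplus + w xplus + γ / 2 * ‖xplus - x‖ ^ 2
      ≤ φ y + w y + γ / 2 * ‖y - x‖ ^ 2)
    (hφL : φ x - φ xplus ≤ L * ‖xplus - x‖) (hfL : f xplus - f x ≤ Lf * ‖xplus - x‖) :
    moreau xplus ≤ ψ (prox x) + ρ / (γ - κ) * ((φ (prox x) - φ x + L ^ 2 / (γ - ρ))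
      + (f x - f (prox x) + Lf ^ 2 / (γ - ρ) + (γ - ρ) / 2 * ‖prox x - x‖ ^ 2)) := by
  have hgrowth := half_mul_norm_sub_update_sq_le hφ hw hργ hupdate
    (by simpa only [hψ] using hprox x xplus) hφL hfL
  calc moreau xplus ≤ ψ (prox x) + ρ / 2 * ‖prox x - xplus‖ ^ 2 := hmoreau xplus ▸ hprox _ _
    _ = ψ (prox x) + ρ / (γ - κ) * ((γ - κ) / 2 * ‖prox x - xplus‖ ^ 2) := by
      field_simp [(sub_pos.2 hκγ).ne']
    _ ≤ _ := by
      gcongr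
      linarith [add_div (L ^ 2) (Lf ^ 2) (γ - ρ)]

end ModelObjective

lemma integral_le_const_add_mul_of_le {S : Type*} [MeasurableSpace S] {μ : Measure S}
    [IsProbabilityMeasure μ] {g h : S → ℝ} {a b k : ℝ} (hgh : ∀ s, g s ≤ a + b * (h s + k))
    (hg : Integrable g μ) (hh : Integrable h μ) :
    ∫ s, g s ∂μ ≤ a + b * ((∫ s, h s ∂μ) + k) := by
  have hhk : Integrable (fun s => h s + k) μ := hh.add (integrable_const k)
  have hmaj : Integrable (fun s => a + b * (h s + k)) μ :=
    (integrable_const a).add (hhk.const_mul b)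
  refine (integral_mono hg hmaj hgh).trans_eq ?_
  rw [integral_add (integrable_const a) (hhk.const_mul b), integral_const_mul,
    integral_add hh (integrable_const k)]
  simp only [integral_const, probReal_univ, one_smul]

theorem one_step_descent_standard_lipschitz_general
    {n : ℕ} {S : Type*} [MeasurableSpace S] (μ : Measure S) [IsProbabilityMeasure μ]
    (f w ψ : EuclideanSpace ℝ (Fin n) → ℝ)
    (fmod : EuclideanSpace ℝ (Fin n) → EuclideanSpace ℝ (Fin n) → S → ℝ)
    (Lfs : S → ℝ) (κ τ ρ γ Lf : ℝ)
    (prox : EuclideanSpace ℝ (Fin n) → EuclideanSpace ℝ (Fin n))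
    (moreau : EuclideanSpace ℝ (Fin n) → ℝ)
    -- basic parameter assumptions
    (hκ : 0 ≤ κ) (hτ : 0 ≤ τ) (hρ : κ + τ < ρ) (hγ : ρ < γ)
    -- composite objective
    (hψdef : ∀ x, ψ x = f x + w x)
    -- A2: `w` is κ-weakly convex and L_ω-Lipschitz
    (hw_weak : ConvexOn ℝ Set.univ (fun x => w x + κ / 2 * ‖x‖ ^ 2))
    -- A3: properties of the stochastic model
    (hmodel_conv : ∀ x s, ConvexOn ℝ Set.univ (fun y => fmod x y s))
    (hmodel_int : ∀ x y, Integrable (fun s => fmod x y s) μ)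
    (hmodel_center : ∀ x, ∫ s, fmod x x s ∂μ = f x)
    (hmodel_acc : ∀ x y, (∫ s, fmod x y s ∂μ) - f y ≤ τ / 2 * ‖x - y‖ ^ 2)
    -- B1: standard Lipschitz continuity of the models, and its consequence for `f`
    (hB1 : ∀ x y z s, fmod x y s - fmod x z s ≤ Lfs s * ‖y - z‖)
    (hLfs_int : Integrable (fun s => Lfs s ^ 2) μ)
    (hLfs_bound : ∫ s, Lfs s ^ 2 ∂μ ≤ Lf ^ 2)
    (hf_lip : ∀ x y, f x - f y ≤ Lf * ‖x - y‖)
    -- Moreau envelope `ψ_{1/ρ}` and proximal mapping `prox = prox_{ψ/ρ}`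
    (hprox : ∀ x z, ψ (prox x) + ρ / 2 * ‖prox x - x‖ ^ 2 ≤ ψ z + ρ / 2 * ‖z - x‖ ^ 2)
    (hmoreau : ∀ x, moreau x = ψ (prox x) + ρ / 2 * ‖prox x - x‖ ^ 2)
    -- the current point and the stochastic one-step update
    (x : EuclideanSpace ℝ (Fin n)) (xplus : S → EuclideanSpace ℝ (Fin n))
    (hupdate : ∀ s y,
      fmod x (xplus s) s + w (xplus s) + γ / 2 * ‖xplus s - x‖ ^ 2
        ≤ fmod x y s + w y + γ / 2 * ‖y - x‖ ^ 2)
    (hint : Integrable (fun s => moreau (xplus s)) μ) :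
    ∫ s, moreau (xplus s) ∂μ
      ≤ moreau x - ρ * (ρ - τ - κ) / (2 * (γ - κ)) * ‖prox x - x‖ ^ 2
        + 2 * ρ * Lf ^ 2 / ((γ - ρ) * (γ - κ)) := by
  set xhat := prox x
  have hγκ : 0 < γ - κ := by linarith
  have hgap : Integrable (fun s => fmod x xhat s - fmod x x s) μ :=
    (hmodel_int x xhat).sub (hmodel_int x x)
  have hLfs_div : Integrable (fun s => Lfs s ^ 2 / (γ - ρ)) μ := hLfs_int.div_const _
  have hpoint s := moreau_update_le hψdef (hmodel_conv x s) hw_weak (by linarith) (by linarith) hγ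
    hprox hmoreau (hupdate s) (by simpa only [norm_sub_rev] using hB1 x x (xplus s) s) (hf_lip _ _)
  have hmean : ∫ s, (fmod x xhat s - fmod x x s + Lfs s ^ 2 / (γ - ρ)) ∂μ
      ≤ f xhat - f x + τ / 2 * ‖xhat - x‖ ^ 2 + Lf ^ 2 / (γ - ρ) := by
    rw [integral_add hgap hLfs_div, integral_sub (hmodel_int x xhat) (hmodel_int x x),
      integral_div, hmodel_center]
    have hacc := hmodel_acc x xhat
    rw [norm_sub_rev] at hacc
    linarith [div_le_div_of_nonneg_right hLfs_bound (sub_pos.2 hγ).le]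
  calc ∫ s, moreau (xplus s) ∂μ
      ≤ ψ xhat + ρ / (γ - κ) * ((∫ s, (fmod x xhat s - fmod x x s + Lfs s ^ 2 / (γ - ρ)) ∂μ)
        + (f x - f xhat + Lf ^ 2 / (γ - ρ) + (γ - ρ) / 2 * ‖xhat - x‖ ^ 2)) :=
        integral_le_const_add_mul_of_le hpoint hint (hgap.add hLfs_div)
    _ ≤ ψ xhat + ρ / (γ - κ) * ((f xhat - f x + τ / 2 * ‖xhat - x‖ ^ 2 + Lf ^ 2 / (γ - ρ))
        + (f x - f xhat + Lf ^ 2 / (γ - ρ) + (γ - ρ) / 2 * ‖xhat - x‖ ^ 2)) := by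
        gcongr
        exact div_nonneg (by linarith) hγκ.le
    _ = _ := by
        rw [hmoreau x]
        field_simp
        ring

/-- **Lemma 1** (one-step descent under standard Lipschitz continuity).
Stochastic model-based minimization of `ψ = f + w`, where `w` is `κ`-weakly convex and
`L_ω`-Lipschitz, the stochastic models `fmod xary` are convex, unbiased at the center,
`τ/2`-accurate in expectation, and uniformly `L_f(ξ)`-Lipschitz (assumption B1).
If `ρ > κ + τ`, `γ > ρ`, and `x⁺(ξ)` is the minimizer of the regularized model at `x`,
then `E_ξ[ψ_{1/ρ}(x⁺(ξ))] ≤ ψ_{1/ρ}(x) - ρ(ρ-τ-κ)/(2(γ-κ)) ‖x̂-x‖² + 2ρL_f²/((γ-ρ)(γ-κ))`. -/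
theorem one_step_descent_standard_lipschitz
    {n : ℕ} {S : Type*} [MeasurableSpace S] (μ : Measure S) [IsProbabilityMeasure μ]
    (f w ψ : EuclideanSpace ℝ (Fin n) → ℝ)
    (fmod : EuclideanSpace ℝ (Fin n) → EuclideanSpace ℝ (Fin n) → S → ℝ)
    (Lfs : S → ℝ) (κ τ ρ γ Lf Lw : ℝ)
    (prox : EuclideanSpace ℝ (Fin n) → EuclideanSpace ℝ (Fin n))
    (moreau : EuclideanSpace ℝ (Fin n) → ℝ)
    -- basic parameter assumptions
    (hκ : 0 ≤ κ) (hτ : 0 ≤ τ) (hρ : κ + τ < ρ) (hγ : ρ < γ)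
    (hLf : 0 ≤ Lf) (hLw : 0 ≤ Lw)
    -- composite objective
    (hψdef : ∀ x, ψ x = f x + w x)
    -- A2: `w` is κ-weakly convex and L_ω-Lipschitz
    (hw_weak : ConvexOn ℝ Set.univ (fun x => w x + κ / 2 * ‖x‖ ^ 2))
    (hw_lip : ∀ x y, |w x - w y| ≤ Lw * ‖x - y‖)
    -- A3: properties of the stochastic model
    (hmodel_conv : ∀ x s, ConvexOn ℝ Set.univ (fun y => fmod x y s))
    (hmodel_int : ∀ x y, Integrable (fun s => fmod x y s) μ)
    (hmodel_center : ∀ x, ∫ s, fmod x x s ∂μ = f x)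
    (hmodel_acc : ∀ x y, (∫ s, fmod x y s ∂μ) - f y ≤ τ / 2 * ‖x - y‖ ^ 2)
    -- B1: standard Lipschitz continuity of the models, and its consequence for `f`
    (hB1 : ∀ x y z s, fmod x y s - fmod x z s ≤ Lfs s * ‖y - z‖)
    (hLfs_int : Integrable (fun s => Lfs s ^ 2) μ)
    (hLfs_bound : ∫ s, Lfs s ^ 2 ∂μ ≤ Lf ^ 2)
    (hf_lip : ∀ x y, f x - f y ≤ Lf * ‖x - y‖)
    -- Moreau envelope `ψ_{1/ρ}` and proximal mapping `prox = prox_{ψ/ρ}`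
    (hprox : ∀ x z, ψ (prox x) + ρ / 2 * ‖prox x - x‖ ^ 2 ≤ ψ z + ρ / 2 * ‖z - x‖ ^ 2)
    (hmoreau : ∀ x, moreau x = ψ (prox x) + ρ / 2 * ‖prox x - x‖ ^ 2)
    -- the current point and the stochastic one-step update
    (x : EuclideanSpace ℝ (Fin n)) (xplus : S → EuclideanSpace ℝ (Fin n))
    (hupdate : ∀ s y,
      fmod x (xplus s) s + w (xplus s) + γ / 2 * ‖xplus s - x‖ ^ 2
        ≤ fmod x y s + w y + γ / 2 * ‖y - x‖ ^ 2)
    (hint : Integrable (fun s => moreau (xplus s)) μ) :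
    ∫ s, moreau (xplus s) ∂μ
      ≤ moreau x - ρ * (ρ - τ - κ) / (2 * (γ - κ)) * ‖prox x - x‖ ^ 2
        + 2 * ρ * Lf ^ 2 / ((γ - ρ) * (γ - κ)) :=
  one_step_descent_standard_lipschitz_general μ f w ψ fmod Lfs κ τ ρ γ Lf prox moreau hκ hτ hρ hγ
    hψdef hw_weak hmodel_conv hmodel_int hmodel_center hmodel_acc hB1 hLfs_int hLfs_bound hf_lip
    hprox hmoreau x xplus hupdate hint
end

section
/- Convergence rate under standard Lipschitz continuity: Let ρ > κ + τ and run the stochastic model-based method x^{k+1} = argmin_x { f_{x^k}(x,ξ^k) + ω(x) + (γ_k/2)‖x − x^k‖² } with i.i.d. samples ξ^k ∼ Ξ and constant stepsize γ_k ≡ ρ + κ + α√K for some α > 0. Then min_{1≤k≤K} E[‖∇ψ_{1/ρ}(x^k)‖²] ≤ (2ρ/(ρ − τ − κ)) [ ρD/K + (1/√K)( αD + 2ρL_f²/α ) ], where D = ψ(x¹) − inf_x ψ(x). -/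
/-!
The Moreau envelope `ψ_{1/ρ}` serves as a Lyapunov function. A step of the method minimizes the
convex model plus the `κ`-weakly convex `ω` plus `γ/2 ‖· - x‖²`, a `(γ - κ)`-strongly convex
function, so its minimizer `x⁺` beats `x̂ = prox x` by `(γ - κ)/2 ‖x̂ - x⁺‖²`. Adding the defining
inequality of `x̂` and absorbing the Lipschitz terms by Young's inequality gives
`ψ_{1/ρ}(x⁺) ≤ ψ_{1/ρ}(x) - ρ/2 ‖x - x̂‖² + ρ/(γ - κ) · (model error at x̂ + O(L²/(γ - ρ)))`.
The sample used in the step is independent of `x`, so in expectation the model error is at most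
`τ/2 ‖x - x̂‖²`, leaving a decrease of `ρ(ρ - κ - τ)/(2(γ - κ)) E‖x - x̂‖²` per step up to
`O(L²/(γ - ρ))`. Telescoping over `K` steps, with `inf ψ ≤ ψ_{1/ρ} ≤ ψ`, bounds the average of
`E‖∇ψ_{1/ρ}(x^k)‖²`, hence its minimum; `γ = ρ + κ + α√K` balances the two error terms.
-/

open MeasureTheory Set Filter Topology Finset

section Convexity

variable {E : Type*} [NormedAddCommGroup E] [InnerProductSpace ℝ E] {s : Set E}

lemma convexOn_mul_sq_norm_sub_sub_mul_sq_norm (hs : Convex ℝ s) (c : ℝ) (x : E) :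
    ConvexOn ℝ s fun y => c * ‖y - x‖ ^ 2 - c * ‖y‖ ^ 2 :=
  (((-(2 * c)) • innerₛₗ ℝ x).convexOn hs).add (convexOn_const (c * ‖x‖ ^ 2) hs)
    |>.congr fun y _ => by
      simp only [Pi.add_apply, LinearMap.smul_apply, innerₛₗ_apply_apply, smul_eq_mul,
        norm_sub_sq_real, real_inner_comm x y]
      ring

lemma strongConvexOn_add_add_mul_sq_norm_sub {F w : E → ℝ} {κ : ℝ} (hF : ConvexOn ℝ s F)
    (hw : ConvexOn ℝ s fun y => w y + κ / 2 * ‖y‖ ^ 2) (γ : ℝ) (x : E) :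
    StrongConvexOn s (γ - κ) fun y => F y + w y + γ / 2 * ‖y - x‖ ^ 2 := by
  rw [strongConvexOn_iff_convex]
  exact (hF.add hw).add (convexOn_mul_sq_norm_sub_sub_mul_sq_norm hF.1 (γ / 2) x)
    |>.congr fun y _ => by simp only [Pi.add_apply]; ring

lemma StrongConvexOn.add_mul_sq_norm_sub_le_of_isMinOn {g : E → ℝ} {m : ℝ} {x₀ y : E}
    (hg : StrongConvexOn s m g) (hmin : IsMinOn g s x₀) (hx₀ : x₀ ∈ s) (hy : y ∈ s) :
    g x₀ + m / 2 * ‖y - x₀‖ ^ 2 ≤ g y := by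
  -- compare `g x₀` with `g` at the point `(1 - t) • x₀ + t • y`, then let `t → 0⁺`
  have hshrink : ∀ t ∈ Ioo (0 : ℝ) 1, g x₀ + (1 - t) * (m / 2 * ‖y - x₀‖ ^ 2) ≤ g y := by
    rintro t ⟨ht₀, ht₁⟩
    have hcombo := hg.2 hx₀ hy (sub_pos.2 ht₁).le ht₀.le (sub_add_cancel 1 t)
    have hle : g x₀ ≤ g ((1 - t) • x₀ + t • y) :=
      hmin (hg.1 hx₀ hy (sub_pos.2 ht₁).le ht₀.le (sub_add_cancel 1 t))
    simp only [smul_eq_mul, norm_sub_rev x₀ y] at hcombo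
    have : t * (g x₀ + (1 - t) * (m / 2 * ‖y - x₀‖ ^ 2)) ≤ t * g y := by linarith
    exact le_of_mul_le_mul_left this ht₀
  have hlim : Tendsto (fun t : ℝ => g x₀ + (1 - t) * (m / 2 * ‖y - x₀‖ ^ 2)) (𝓝[>] 0)
      (𝓝 (g x₀ + (1 - 0) * (m / 2 * ‖y - x₀‖ ^ 2))) :=
    (Continuous.tendsto (by fun_prop) 0).mono_left nhdsWithin_le_nhds
  simpa using le_of_tendsto hlim (mem_of_superset (Ioo_mem_nhdsGT one_pos) hshrink)

end Convexity

section ProductSpace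

variable {ι : Type*} [Fintype ι] [DecidableEq ι] {X : ι → Type*} [∀ i, MeasurableSpace (X i)]
  (μ : ∀ i, Measure (X i)) [∀ i, IsProbabilityMeasure (μ i)]

lemma measurePreserving_update (i : ι) :
    MeasurePreserving (fun p : (∀ j, X j) × X i => Function.update p.1 i p.2)
      ((Measure.pi μ).prod (μ i)) (Measure.pi μ) := by
  refine ⟨measurable_update', (Measure.pi_eq fun A hA => ?_).symm⟩
  have hpre : (fun p : (∀ j, X j) × X i => Function.update p.1 i p.2) ⁻¹' univ.pi A
      = univ.pi (Function.update A i univ) ×ˢ A i := by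
    ext ⟨ω, s⟩
    simp only [Set.mem_preimage, Set.mem_pi, Set.mem_univ, forall_const, Set.mem_prod]
    constructor
    · intro h
      refine ⟨fun j => ?_, by simpa using h i⟩
      by_cases hj : j = i
      · subst hj; simp
      · simpa [hj] using h j
    · rintro ⟨h, hs⟩ j
      by_cases hj : j = i
      · subst hj; simpa using hs
      · simpa [hj] using h j
  rw [Measure.map_apply measurable_update' (MeasurableSet.univ_pi hA), hpre, Measure.prod_prod,
    Measure.pi_pi, ← Finset.prod_erase_mul _ _ (Finset.mem_univ i), Function.update_self,
    measure_univ, mul_one, ← Finset.prod_erase_mul _ (fun j => μ j (A j)) (Finset.mem_univ i)]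
  congr 1
  exact Finset.prod_congr rfl fun j hj => by rw [Function.update_of_ne (Finset.ne_of_mem_erase hj)]

lemma integral_le_of_forall_integral_update_le (i : ι) {h g : (∀ j, X j) → ℝ}
    (hh : Integrable h (Measure.pi μ)) (hg : Integrable g (Measure.pi μ))
    (hle : ∀ ω, Integrable (fun s => h (Function.update ω i s)) (μ i) →
      ∫ s, h (Function.update ω i s) ∂μ i ≤ g ω) :
    ∫ ω, h ω ∂Measure.pi μ ≤ ∫ ω, g ω ∂Measure.pi μ := by
  have hmp := measurePreserving_update μ i
  have hcomp := hmp.integrable_comp_of_integrable hh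
  calc ∫ ω, h ω ∂Measure.pi μ
      = ∫ p, h (Function.update p.1 i p.2) ∂(Measure.pi μ).prod (μ i) := by
        rw [← integral_map hmp.measurable.aemeasurable
          (by rw [hmp.map_eq]; exact hh.aestronglyMeasurable), hmp.map_eq]
    _ = ∫ ω, ∫ s, h (Function.update ω i s) ∂μ i ∂Measure.pi μ := integral_prod _ hcomp
    _ ≤ ∫ ω, g ω ∂Measure.pi μ :=
        integral_mono_ae hcomp.integral_prod_left hg (hcomp.prod_right_ae.mono hle)

end ProductSpace

section MoreauEnvelope

variable {E : Type*} [NormedAddCommGroup E]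

structure IsMoreauEnvelope (ψ : E → ℝ) (ρ : ℝ) (prox : E → E) (moreau : E → ℝ) : Prop where
  prox_le : ∀ x z, ψ (prox x) + ρ / 2 * ‖prox x - x‖ ^ 2 ≤ ψ z + ρ / 2 * ‖z - x‖ ^ 2
  eq : ∀ x, moreau x = ψ (prox x) + ρ / 2 * ‖prox x - x‖ ^ 2

namespace IsMoreauEnvelope

variable {ψ f w : E → ℝ} {ρ κ Lf γ : ℝ} {prox : E → E} {moreau : E → ℝ}

lemma apply_le (h : IsMoreauEnvelope ψ ρ prox moreau) (x z : E) :
    moreau x ≤ ψ z + ρ / 2 * ‖z - x‖ ^ 2 :=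
  h.eq x ▸ h.prox_le x z

lemma apply_le_self (h : IsMoreauEnvelope ψ ρ prox moreau) (x : E) : moreau x ≤ ψ x := by
  simpa using h.apply_le x x

lemma iInf_le_apply (h : IsMoreauEnvelope ψ ρ prox moreau) (hψ : BddBelow (range ψ)) (hρ : 0 ≤ ρ)
    (x : E) : ⨅ z, ψ z ≤ moreau x := by
  rw [h.eq]
  have hquad : 0 ≤ ρ / 2 * ‖prox x - x‖ ^ 2 := by positivity
  linarith [ciInf_le hψ (prox x)]

variable [InnerProductSpace ℝ E]

theorem model_step_le (h : IsMoreauEnvelope ψ ρ prox moreau) (hψ : ∀ x, ψ x = f x + w x)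
    (hw : ConvexOn ℝ univ fun y => w y + κ / 2 * ‖y‖ ^ 2)
    (hf_lip : ∀ x y, f x - f y ≤ Lf * ‖x - y‖) {F : E → ℝ} {ℓ : ℝ} (hF : ConvexOn ℝ univ F)
    (hF_lip : ∀ y z, F y - F z ≤ ℓ * ‖y - z‖) (hκγ : κ < γ) (hργ : ρ < γ) (hρ : 0 ≤ ρ)
    {x xp : E} (hxp : ∀ y, F xp + w xp + γ / 2 * ‖xp - x‖ ^ 2 ≤ F y + w y + γ / 2 * ‖y - x‖ ^ 2) :
    moreau xp ≤ moreau x - ρ / 2 * ‖x - prox x‖ ^ 2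
      + ρ / (γ - κ) * (F (prox x) - F x + (f x - f (prox x)) + (Lf ^ 2 + ℓ ^ 2) / (γ - ρ)
        + (γ - ρ) / 2 * ‖x - prox x‖ ^ 2) := by
  set p := prox x
  have hG : 0 < γ - κ := sub_pos.2 hκγ
  have hg : 0 < γ - ρ := sub_pos.2 hργ
  have hthree : F xp + w xp + γ / 2 * ‖xp - x‖ ^ 2 + (γ - κ) / 2 * ‖p - xp‖ ^ 2
      ≤ F p + w p + γ / 2 * ‖p - x‖ ^ 2 :=
    (strongConvexOn_add_add_mul_sq_norm_sub hF hw γ x).add_mul_sq_norm_sub_le_of_isMinOn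
      (isMinOn_univ_iff.2 hxp) (mem_univ _) (mem_univ _)
  have hprox : f p + w p + ρ / 2 * ‖p - x‖ ^ 2 ≤ f xp + w xp + ρ / 2 * ‖xp - x‖ ^ 2 := by
    simpa only [hψ] using h.prox_le x xp
  have hF_le : F x - F xp ≤ ℓ * ‖xp - x‖ := norm_sub_rev x xp ▸ hF_lip x xp
  have hf_le : f xp - f x ≤ Lf * ‖xp - x‖ := hf_lip xp x
  have hyoung : (Lf + ℓ) * ‖xp - x‖ - (γ - ρ) / 2 * ‖xp - x‖ ^ 2 ≤ (Lf ^ 2 + ℓ ^ 2) / (γ - ρ) := by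
    rw [le_div_iff₀ hg]
    nlinarith [sq_nonneg (Lf + ℓ - (γ - ρ) * ‖xp - x‖), sq_nonneg (Lf - ℓ)]
  have hdist : (γ - κ) / 2 * ‖p - xp‖ ^ 2 ≤ F p - F x + (f x - f p) + (Lf ^ 2 + ℓ ^ 2) / (γ - ρ)
      + (γ - ρ) / 2 * ‖x - p‖ ^ 2 := by
    rw [norm_sub_rev x p]
    linarith
  calc moreau xp ≤ ψ p + ρ / 2 * ‖p - xp‖ ^ 2 := h.apply_le xp p
    _ = ψ p + ρ / (γ - κ) * ((γ - κ) / 2 * ‖p - xp‖ ^ 2) := by field_simp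
    _ ≤ ψ p + ρ / (γ - κ) * (F p - F x + (f x - f p) + (Lf ^ 2 + ℓ ^ 2) / (γ - ρ)
          + (γ - ρ) / 2 * ‖x - p‖ ^ 2) := by gcongr
    _ = _ := by rw [h.eq x, norm_sub_rev x p]; ring

theorem integral_model_step_le {S : Type*} [MeasurableSpace S] {μ : Measure S}
    [IsProbabilityMeasure μ] (h : IsMoreauEnvelope ψ ρ prox moreau) (hψ : ∀ x, ψ x = f x + w x)
    (hw : ConvexOn ℝ univ fun y => w y + κ / 2 * ‖y‖ ^ 2)
    (hf_lip : ∀ x y, f x - f y ≤ Lf * ‖x - y‖) {τ : ℝ} {x : E} {m : E → S → ℝ} {L : S → ℝ}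
    (hm_conv : ∀ s, ConvexOn ℝ univ fun y => m y s) (hm_int : ∀ y, Integrable (m y) μ)
    (hm_center : ∫ s, m x s ∂μ = f x)
    (hm_acc : ∫ s, m (prox x) s ∂μ - f (prox x) ≤ τ / 2 * ‖x - prox x‖ ^ 2)
    (hm_lip : ∀ y z s, m y s - m z s ≤ L s * ‖y - z‖)
    (hL_int : Integrable (fun s => L s ^ 2) μ) (hL : ∫ s, L s ^ 2 ∂μ ≤ Lf ^ 2)
    (hκγ : κ < γ) (hργ : ρ < γ) (hρ : 0 ≤ ρ) {xp : S → E}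
    (hxp : ∀ s y, m (xp s) s + w (xp s) + γ / 2 * ‖xp s - x‖ ^ 2
      ≤ m y s + w y + γ / 2 * ‖y - x‖ ^ 2)
    (hint : Integrable (fun s => moreau (xp s)) μ) :
    ∫ s, moreau (xp s) ∂μ ≤ moreau x - ρ * (ρ - κ - τ) / (2 * (γ - κ)) * ‖x - prox x‖ ^ 2
      + ρ / (γ - κ) * (2 * Lf ^ 2 / (γ - ρ)) := by
  set p := prox x
  set d := ‖x - p‖ ^ 2
  have hG : 0 < γ - κ := sub_pos.2 hκγ
  have hg : 0 < γ - ρ := sub_pos.2 hργ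
  -- split the bound of `model_step_le` into a constant and two integrable parts
  set A := moreau x - ρ / 2 * d + ρ / (γ - κ) * (f x - f p + Lf ^ 2 / (γ - ρ) + (γ - ρ) / 2 * d)
    with hA
  have hpt : ∀ s, moreau (xp s)
      ≤ A + ρ / (γ - κ) * (m p s - m x s) + ρ / (γ - κ) / (γ - ρ) * L s ^ 2 := fun s =>
    (h.model_step_le hψ hw hf_lip (hm_conv s) (fun y z => hm_lip y z s) hκγ hργ hρ
      (hxp s)).trans_eq (by simp only [hA, d]; ring)
  have hint_model : Integrable (fun s => ρ / (γ - κ) * (m p s - m x s)) μ :=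
    ((hm_int p).sub (hm_int x)).const_mul _
  have hint_lip : Integrable (fun s => ρ / (γ - κ) / (γ - ρ) * L s ^ 2) μ :=
    hL_int.const_mul _
  have hint_affine : Integrable (fun s => A + ρ / (γ - κ) * (m p s - m x s)) μ :=
    (integrable_const A).add hint_model
  have hmodel : ρ / (γ - κ) * (∫ s, m p s ∂μ - ∫ s, m x s ∂μ)
      ≤ ρ / (γ - κ) * (f p + τ / 2 * d - f x) := by
    rw [hm_center]; gcongr; linarith
  have hlip : ρ / (γ - κ) / (γ - ρ) * ∫ s, L s ^ 2 ∂μ ≤ ρ / (γ - κ) / (γ - ρ) * Lf ^ 2 := by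
    gcongr
  calc ∫ s, moreau (xp s) ∂μ
      ≤ ∫ s, (A + ρ / (γ - κ) * (m p s - m x s) + ρ / (γ - κ) / (γ - ρ) * L s ^ 2) ∂μ :=
        integral_mono hint (hint_affine.add hint_lip) hpt
    _ = A + ρ / (γ - κ) * (∫ s, m p s ∂μ - ∫ s, m x s ∂μ)
          + ρ / (γ - κ) / (γ - ρ) * ∫ s, L s ^ 2 ∂μ := by
        rw [integral_add hint_affine hint_lip,
          integral_add (integrable_const A) hint_model, integral_const, integral_const_mul,
          integral_sub (hm_int p) (hm_int x), integral_const_mul]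
        simp
    _ ≤ A + ρ / (γ - κ) * (f p + τ / 2 * d - f x) + ρ / (γ - κ) / (γ - ρ) * Lf ^ 2 := by
        linarith
    _ = _ := by rw [hA]; field_simp; ring

theorem integral_iterate_succ_le {ι S : Type*} [Fintype ι] [DecidableEq ι]
    [MeasurableSpace S] {μ : Measure S} [IsProbabilityMeasure μ]
    (h : IsMoreauEnvelope ψ ρ prox moreau) (hψ : ∀ x, ψ x = f x + w x)
    (hw : ConvexOn ℝ univ fun y => w y + κ / 2 * ‖y‖ ^ 2)
    (hf_lip : ∀ x y, f x - f y ≤ Lf * ‖x - y‖) {τ : ℝ} {fmod : E → E → S → ℝ} {L : S → ℝ}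
    (hm_conv : ∀ x s, ConvexOn ℝ univ fun y => fmod x y s)
    (hm_int : ∀ x y, Integrable (fun s => fmod x y s) μ)
    (hm_center : ∀ x, ∫ s, fmod x x s ∂μ = f x)
    (hm_acc : ∀ x y, ∫ s, fmod x y s ∂μ - f y ≤ τ / 2 * ‖x - y‖ ^ 2)
    (hm_lip : ∀ x y z s, fmod x y s - fmod x z s ≤ L s * ‖y - z‖)
    (hL_int : Integrable (fun s => L s ^ 2) μ) (hL : ∫ s, L s ^ 2 ∂μ ≤ Lf ^ 2)
    (hκγ : κ < γ) (hργ : ρ < γ) (hρ : 0 ≤ ρ) {x xp : (ι → S) → E} (i : ι)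
    (hx : ∀ ω s, x (Function.update ω i s) = x ω)
    (hxp : ∀ ω y, fmod (x ω) (xp ω) (ω i) + w (xp ω) + γ / 2 * ‖xp ω - x ω‖ ^ 2
      ≤ fmod (x ω) y (ω i) + w y + γ / 2 * ‖y - x ω‖ ^ 2)
    (hint_dist : Integrable (fun ω => ‖x ω - prox (x ω)‖ ^ 2) (Measure.pi fun _ => μ))
    (hint_x : Integrable (fun ω => moreau (x ω)) (Measure.pi fun _ => μ))
    (hint_xp : Integrable (fun ω => moreau (xp ω)) (Measure.pi fun _ => μ)) :
    ∫ ω, moreau (xp ω) ∂Measure.pi (fun _ => μ)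
      ≤ ∫ ω, moreau (x ω) ∂Measure.pi (fun _ => μ)
        - ρ * (ρ - κ - τ) / (2 * (γ - κ)) * ∫ ω, ‖x ω - prox (x ω)‖ ^ 2 ∂Measure.pi (fun _ => μ)
        + ρ / (γ - κ) * (2 * Lf ^ 2 / (γ - ρ)) := by
  have hint_sub : Integrable (fun ω => moreau (x ω)
      - ρ * (ρ - κ - τ) / (2 * (γ - κ)) * ‖x ω - prox (x ω)‖ ^ 2) (Measure.pi fun _ => μ) :=
    hint_x.sub (hint_dist.const_mul _)
  have hint_rhs : Integrable (fun ω => moreau (x ω)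
      - ρ * (ρ - κ - τ) / (2 * (γ - κ)) * ‖x ω - prox (x ω)‖ ^ 2
      + ρ / (γ - κ) * (2 * Lf ^ 2 / (γ - ρ))) (Measure.pi fun _ => μ) :=
    hint_sub.add (integrable_const _)
  refine (integral_le_of_forall_integral_update_le (fun _ => μ) i hint_xp hint_rhs
    fun ω hω => ?_).trans_eq ?_
  · refine h.integral_model_step_le hψ hw hf_lip (hm_conv _) (hm_int _) (hm_center _)
      (hm_acc _ _) (hm_lip _) hL_int hL hκγ hργ hρ (fun s y => ?_) hω
    simpa [hx] using hxp (Function.update ω i s) y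
  · rw [integral_add hint_sub (integrable_const _), integral_sub hint_x (hint_dist.const_mul _),
      integral_const_mul, integral_const]
    simp

end IsMoreauEnvelope

end MoreauEnvelope

lemma mul_sum_range_le_of_le_sub_add {a d : ℕ → ℝ} {c b : ℝ} {K : ℕ}
    (h : ∀ k < K, a (k + 1) ≤ a k - c * d k + b) :
    c * ∑ k ∈ range K, d k ≤ a 0 - a K + K * b := by
  induction K with
  | zero => simp
  | succ K ih =>
    rw [sum_range_succ, mul_add, Nat.cast_succ]
    linarith [ih fun k hk => h k (by omega), h K (by omega)]

lemma exists_lt_le_of_sum_range_le {f : ℕ → ℝ} {b : ℝ} {K : ℕ} (hK : 0 < K)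
    (h : ∑ k ∈ range K, f k ≤ K * b) : ∃ k < K, f k ≤ b := by
  obtain ⟨k, hk, hle⟩ := exists_le_of_sum_le (nonempty_range_iff.2 hK.ne') (g := fun _ => b)
    (by simpa using h)
  exact ⟨k, mem_range.1 hk, hle⟩

lemma sq_mul_le_rate_of_mul_le {ρ κ τ α Lf D T : ℝ} {K : ℕ} (hK : 0 < K) (hκ : 0 ≤ κ)
    (hρ : κ + τ < ρ) (hρ₀ : 0 < ρ) (hα : 0 < α)
    (h : ρ * (ρ - κ - τ) / (2 * (ρ + κ + α * √K - κ)) * T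
      ≤ D + K * (ρ / (ρ + κ + α * √K - κ) * (2 * Lf ^ 2 / (ρ + κ + α * √K - ρ)))) :
    ρ ^ 2 * T ≤ K * (2 * ρ / (ρ - τ - κ)
      * (ρ * D / K + (1 / √K) * (α * D + 2 * ρ * Lf ^ 2 / α))) := by
  have hgap : 0 < ρ - κ - τ := by linarith
  have hsK : 0 < √(K : ℝ) := Real.sqrt_pos.2 (Nat.cast_pos.2 hK)
  have hKsq : (K : ℝ) = √K * √K := (Real.mul_self_sqrt (Nat.cast_nonneg K)).symm
  set r := √(K : ℝ)
  rw [show ρ + κ + α * r - κ = ρ + α * r by ring, show ρ + κ + α * r - ρ = κ + α * r by ring] at h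
  have hgpos : 0 < κ + α * r := by positivity
  have hstep : K * (2 * ρ * Lf ^ 2 / (κ + α * r)) ≤ r * (2 * ρ * Lf ^ 2 / α) := by
    rw [mul_div_assoc', mul_div_assoc', div_le_div_iff₀ hgpos hα, hKsq]
    have : 0 ≤ 2 * ρ * Lf ^ 2 := by positivity
    nlinarith [mul_nonneg (mul_nonneg hsK.le hκ) this]
  calc ρ ^ 2 * T
      = 2 * ρ * (ρ + α * r) / (ρ - κ - τ) * (ρ * (ρ - κ - τ) / (2 * (ρ + α * r)) * T) := by
        field_simp
    _ ≤ 2 * ρ * (ρ + α * r) / (ρ - κ - τ)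
          * (D + K * (ρ / (ρ + α * r) * (2 * Lf ^ 2 / (κ + α * r)))) := by
        gcongr
    _ = 2 * ρ / (ρ - κ - τ) * ((ρ + α * r) * D + K * (2 * ρ * Lf ^ 2 / (κ + α * r))) := by
        field_simp
    _ ≤ 2 * ρ / (ρ - κ - τ) * ((ρ + α * r) * D + r * (2 * ρ * Lf ^ 2 / α)) := by
        gcongr
    _ = _ := by
        rw [show ρ - τ - κ = ρ - κ - τ by ring, hKsq]
        field_simp
        ring

/-- The iterate `X k` stands for `x^{k+1}` and depends only on the first `k` samples;
`ρ ‖x - prox x‖ = ‖∇ψ_{1/ρ}(x)‖`. -/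
theorem rate_standard_lipschitz_general
    {n : ℕ} {S : Type*} [MeasurableSpace S] (μ : Measure S) [IsProbabilityMeasure μ]
    (f w ψ : EuclideanSpace ℝ (Fin n) → ℝ)
    (fmod : EuclideanSpace ℝ (Fin n) → EuclideanSpace ℝ (Fin n) → S → ℝ)
    (Lfs : S → ℝ) (κ τ ρ Lf α : ℝ)
    (prox : EuclideanSpace ℝ (Fin n) → EuclideanSpace ℝ (Fin n))
    (moreau : EuclideanSpace ℝ (Fin n) → ℝ)
    -- basic parameter assumptions
    (hκ : 0 ≤ κ) (hτ : 0 ≤ τ) (hρ : κ + τ < ρ) (hα : 0 < α)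
    -- composite objective, lower bounded
    (hψdef : ∀ x, ψ x = f x + w x)
    (hbdd : BddBelow (Set.range ψ))
    -- A2: `w` is κ-weakly convex and L_ω-Lipschitz
    (hw_weak : ConvexOn ℝ Set.univ (fun x => w x + κ / 2 * ‖x‖ ^ 2))
    -- A3: properties of the stochastic model
    (hmodel_conv : ∀ x s, ConvexOn ℝ Set.univ (fun y => fmod x y s))
    (hmodel_int : ∀ x y, Integrable (fun s => fmod x y s) μ)
    (hmodel_center : ∀ x, ∫ s, fmod x x s ∂μ = f x)
    (hmodel_acc : ∀ x y, (∫ s, fmod x y s ∂μ) - f y ≤ τ / 2 * ‖x - y‖ ^ 2)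
    -- B1: standard Lipschitz continuity of the models, and its consequence for `f`
    (hB1 : ∀ x y z s, fmod x y s - fmod x z s ≤ Lfs s * ‖y - z‖)
    (hLfs_int : Integrable (fun s => Lfs s ^ 2) μ)
    (hLfs_bound : ∫ s, Lfs s ^ 2 ∂μ ≤ Lf ^ 2)
    (hf_lip : ∀ x y, f x - f y ≤ Lf * ‖x - y‖)
    -- Moreau envelope `ψ_{1/ρ}` and proximal mapping `prox = prox_{ψ/ρ}`
    (hprox : ∀ x z, ψ (prox x) + ρ / 2 * ‖prox x - x‖ ^ 2 ≤ ψ z + ρ / 2 * ‖z - x‖ ^ 2)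
    (hmoreau : ∀ x, moreau x = ψ (prox x) + ρ / 2 * ‖prox x - x‖ ^ 2)
    -- the algorithm: `K` iterations, i.i.d. samples, constant stepsize `ρ + κ + α√K`
    (K : ℕ) (hK : 1 ≤ K)
    (X : ℕ → (Fin K → S) → EuclideanSpace ℝ (Fin n))
    (x1 : EuclideanSpace ℝ (Fin n)) (hX0 : ∀ ω, X 0 ω = x1)
    (hXadapt : ∀ k, ∀ ω ω' : Fin K → S,
      (∀ i : Fin K, (i : ℕ) < k → ω i = ω' i) → X k ω = X k ω')
    (hupdate : ∀ k (hk : k < K) (ω : Fin K → S) (y : EuclideanSpace ℝ (Fin n)),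
      fmod (X k ω) (X (k + 1) ω) (ω ⟨k, hk⟩) + w (X (k + 1) ω)
          + (ρ + κ + α * Real.sqrt K) / 2 * ‖X (k + 1) ω - X k ω‖ ^ 2
        ≤ fmod (X k ω) y (ω ⟨k, hk⟩) + w y
          + (ρ + κ + α * Real.sqrt K) / 2 * ‖y - X k ω‖ ^ 2)
    -- integrability of the relevant functionals of the iterates
    (hint : ∀ k, Integrable (fun ω => ‖X k ω - prox (X k ω)‖ ^ 2)
      (Measure.pi fun _ : Fin K => μ))
    (hmint : ∀ k, Integrable (fun ω => moreau (X k ω)) (Measure.pi fun _ : Fin K => μ)) :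
    ∃ k < K,
      (∫ ω, ρ ^ 2 * ‖X k ω - prox (X k ω)‖ ^ 2 ∂(Measure.pi fun _ : Fin K => μ))
        ≤ 2 * ρ / (ρ - τ - κ)
            * (ρ * (ψ x1 - ⨅ x, ψ x) / K
               + (1 / Real.sqrt K) * (α * (ψ x1 - ⨅ x, ψ x) + 2 * ρ * Lf ^ 2 / α)) := by
  set ν := Measure.pi fun _ : Fin K => μ
  have hρ₀ : 0 < ρ := by linarith
  have hαK : 0 < α * √K := mul_pos hα (Real.sqrt_pos.2 (by exact_mod_cast hK))
  have hM : IsMoreauEnvelope ψ ρ prox moreau := ⟨hprox, hmoreau⟩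
  have hdescent : ∀ k < K, ∫ ω, moreau (X (k + 1) ω) ∂ν
      ≤ ∫ ω, moreau (X k ω) ∂ν
        - ρ * (ρ - κ - τ) / (2 * (ρ + κ + α * √K - κ)) * ∫ ω, ‖X k ω - prox (X k ω)‖ ^ 2 ∂ν
        + ρ / (ρ + κ + α * √K - κ) * (2 * Lf ^ 2 / (ρ + κ + α * √K - ρ)) := fun k hk =>
    hM.integral_iterate_succ_le hψdef hw_weak hf_lip hmodel_conv hmodel_int hmodel_center
      hmodel_acc hB1 hLfs_int hLfs_bound (by linarith) (by linarith) hρ₀.le ⟨k, hk⟩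
      (fun ω s => hXadapt k _ _ fun i hi => Function.update_of_ne (Fin.ne_of_lt hi) _ _)
      (hupdate k hk) (hint k) (hmint k) (hmint (k + 1))
  have hgap : ∫ ω, moreau (X 0 ω) ∂ν - ∫ ω, moreau (X K ω) ∂ν ≤ ψ x1 - ⨅ x, ψ x := by
    have hinf : ⨅ x, ψ x ≤ ∫ ω, moreau (X K ω) ∂ν := by
      simpa using integral_mono (integrable_const _) (hmint K)
        fun ω => hM.iInf_le_apply hbdd hρ₀.le (X K ω)
    simp only [hX0, integral_const, probReal_univ, one_smul]
    linarith [hM.apply_le_self x1]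
  have htel := mul_sum_range_le_of_le_sub_add (a := fun k => ∫ ω, moreau (X k ω) ∂ν)
    (d := fun k => ∫ ω, ‖X k ω - prox (X k ω)‖ ^ 2 ∂ν) hdescent
  have hsum := sq_mul_le_rate_of_mul_le (D := ψ x1 - ⨅ x, ψ x) (Lf := Lf) hK hκ hρ hρ₀ hα
    (htel.trans (by linarith))
  obtain ⟨k, hk, hle⟩ := exists_lt_le_of_sum_range_le hK ((mul_sum _ _ _).symm.trans_le hsum)
  exact ⟨k, hk, by rwa [integral_const_mul]⟩

/-- **Theorem 1** (convergence rate under standard Lipschitz continuity).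
The stochastic model-based algorithm is run for `K` steps on the product space
`Fin K → S` carrying the i.i.d. product measure: the iterate `X k` (representing `x^{k+1}`,
with `X 0 = x¹`) depends only on the first `k` samples, and `X (k+1)` minimizes the
regularized stochastic model built at `X k` with the `k`-th sample, using the constant
stepsize `γ = ρ + κ + α√K`.  Then
`min_{1≤k≤K} E[‖∇ψ_{1/ρ}(x^k)‖²] ≤ (2ρ/(ρ-τ-κ)) [ρD/K + (αD + 2ρL_f²/α)/√K]`,
where `D = ψ(x¹) - inf ψ` and `‖∇ψ_{1/ρ}(x)‖ = ρ‖x - prox x‖`. -/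
theorem rate_standard_lipschitz
    {n : ℕ} {S : Type*} [MeasurableSpace S] (μ : Measure S) [IsProbabilityMeasure μ]
    (f w ψ : EuclideanSpace ℝ (Fin n) → ℝ)
    (fmod : EuclideanSpace ℝ (Fin n) → EuclideanSpace ℝ (Fin n) → S → ℝ)
    (Lfs : S → ℝ) (κ τ ρ Lf Lw α : ℝ)
    (prox : EuclideanSpace ℝ (Fin n) → EuclideanSpace ℝ (Fin n))
    (moreau : EuclideanSpace ℝ (Fin n) → ℝ)
    -- basic parameter assumptions
    (hκ : 0 ≤ κ) (hτ : 0 ≤ τ) (hρ : κ + τ < ρ) (hα : 0 < α)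
    (hLf : 0 ≤ Lf) (hLw : 0 ≤ Lw)
    -- composite objective, lower bounded
    (hψdef : ∀ x, ψ x = f x + w x)
    (hbdd : BddBelow (Set.range ψ))
    -- A2: `w` is κ-weakly convex and L_ω-Lipschitz
    (hw_weak : ConvexOn ℝ Set.univ (fun x => w x + κ / 2 * ‖x‖ ^ 2))
    (hw_lip : ∀ x y, |w x - w y| ≤ Lw * ‖x - y‖)
    -- A3: properties of the stochastic model
    (hmodel_conv : ∀ x s, ConvexOn ℝ Set.univ (fun y => fmod x y s))
    (hmodel_int : ∀ x y, Integrable (fun s => fmod x y s) μ)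
    (hmodel_center : ∀ x, ∫ s, fmod x x s ∂μ = f x)
    (hmodel_acc : ∀ x y, (∫ s, fmod x y s ∂μ) - f y ≤ τ / 2 * ‖x - y‖ ^ 2)
    -- B1: standard Lipschitz continuity of the models, and its consequence for `f`
    (hB1 : ∀ x y z s, fmod x y s - fmod x z s ≤ Lfs s * ‖y - z‖)
    (hLfs_int : Integrable (fun s => Lfs s ^ 2) μ)
    (hLfs_bound : ∫ s, Lfs s ^ 2 ∂μ ≤ Lf ^ 2)
    (hf_lip : ∀ x y, f x - f y ≤ Lf * ‖x - y‖)
    -- Moreau envelope `ψ_{1/ρ}` and proximal mapping `prox = prox_{ψ/ρ}`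
    (hprox : ∀ x z, ψ (prox x) + ρ / 2 * ‖prox x - x‖ ^ 2 ≤ ψ z + ρ / 2 * ‖z - x‖ ^ 2)
    (hmoreau : ∀ x, moreau x = ψ (prox x) + ρ / 2 * ‖prox x - x‖ ^ 2)
    -- the algorithm: `K` iterations, i.i.d. samples, constant stepsize `ρ + κ + α√K`
    (K : ℕ) (hK : 1 ≤ K)
    (X : ℕ → (Fin K → S) → EuclideanSpace ℝ (Fin n))
    (x1 : EuclideanSpace ℝ (Fin n)) (hX0 : ∀ ω, X 0 ω = x1)
    (hXmeas : ∀ k, Measurable (X k))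
    (hXadapt : ∀ k, ∀ ω ω' : Fin K → S,
      (∀ i : Fin K, (i : ℕ) < k → ω i = ω' i) → X k ω = X k ω')
    (hupdate : ∀ k (hk : k < K) (ω : Fin K → S) (y : EuclideanSpace ℝ (Fin n)),
      fmod (X k ω) (X (k + 1) ω) (ω ⟨k, hk⟩) + w (X (k + 1) ω)
          + (ρ + κ + α * Real.sqrt K) / 2 * ‖X (k + 1) ω - X k ω‖ ^ 2
        ≤ fmod (X k ω) y (ω ⟨k, hk⟩) + w y
          + (ρ + κ + α * Real.sqrt K) / 2 * ‖y - X k ω‖ ^ 2)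
    -- integrability of the relevant functionals of the iterates
    (hint : ∀ k, Integrable (fun ω => ‖X k ω - prox (X k ω)‖ ^ 2)
      (Measure.pi fun _ : Fin K => μ))
    (hmint : ∀ k, Integrable (fun ω => moreau (X k ω)) (Measure.pi fun _ : Fin K => μ)) :
    ∃ k < K,
      (∫ ω, ρ ^ 2 * ‖X k ω - prox (X k ω)‖ ^ 2 ∂(Measure.pi fun _ : Fin K => μ))
        ≤ 2 * ρ / (ρ - τ - κ)
            * (ρ * (ψ x1 - ⨅ x, ψ x) / K
               + (1 / Real.sqrt K) * (α * (ψ x1 - ⨅ x, ψ x) + 2 * ρ * Lf ^ 2 / α)) :=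
  rate_standard_lipschitz_general μ f w ψ fmod Lfs κ τ ρ Lf α prox moreau hκ hτ hρ hα hψdef hbdd
    hw_weak hmodel_conv hmodel_int hmodel_center hmodel_acc hB1 hLfs_int hLfs_bound hf_lip hprox
    hmoreau K hK X x1 hX0 hXadapt hupdate hint hmint
end

section
/- One-step descent under generalized Lipschitz continuity: Let ρ > κ + τ and γ > ρ with γ independent of the sample ξ. Let x ∈ ℝⁿ be fixed and let x⁺(ξ) = argmin_y { f_x(y,ξ) + ω(y) + (γ/2)‖y − x‖² } for a sample ξ ∼ Ξ. Then E_ξ[ψ_{1/ρ}(x⁺(ξ))] ≤ ψ_{1/ρ}(x) − (ρ(ρ − τ − κ)/(2(γ − κ)))‖x̂ − x‖² + ρ(𝒢(‖x‖)L_f + L_ω)²/(2γ(γ − κ)), where x̂ = prox_{ψ/ρ}(x). -/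
open MeasureTheory ProbabilityTheory Filter Topology

/-!
The update `x⁺` minimizes a `(γ - κ)`-strongly convex function, so it beats the comparison point
`x̂ = prox x` by `(γ - κ)/2 ‖x̂ - x⁺‖²`. Trading the Lipschitz terms against `γ/2 ‖x⁺ - x‖²`
(Young) bounds `ρ/2 ‖x̂ - x⁺‖²`, hence `ψ_{1/ρ}(x⁺)`, by quantities evaluated at `x` and `x̂`
only, up to `ρ (𝒢(‖x‖)|L_f(ξ)| + L_ω)² / (2γ(γ - κ))`. Taking expectations, the model
accuracy and the optimality of `x̂` for `ψ + ρ/2 ‖· - x‖²` give the descent.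
-/

theorem StrongConvexOn.add_sq_norm_sub_le_of_isMinOn {E : Type*} [NormedAddCommGroup E]
    [NormedSpace ℝ E] {s : Set E} {m : ℝ} {f : E → ℝ} {u y : E}
    (hf : StrongConvexOn s m f) (hu : IsMinOn f s u) (hus : u ∈ s) (hy : y ∈ s) :
    f u + m / 2 * ‖y - u‖ ^ 2 ≤ f y := by
  have hsegment : ∀ t ∈ Set.Ioc (0 : ℝ) 1, f u + (1 - t) * (m / 2 * ‖y - u‖ ^ 2) ≤ f y := by
    rintro t ⟨ht0, ht1⟩
    have hmem := hf.1 hus hy (sub_nonneg.2 ht1) ht0.le (sub_add_cancel 1 t)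
    have hmin : f u ≤ f ((1 - t) • u + t • y) := hu hmem
    have hconv := hf.2 hus hy (sub_nonneg.2 ht1) ht0.le (sub_add_cancel 1 t)
    rw [norm_sub_rev] at hconv
    simp only [smul_eq_mul] at hconv
    refine le_of_mul_le_mul_left ?_ ht0
    linarith
  have hlim : Tendsto (fun t : ℝ => f u + (1 - t) * (m / 2 * ‖y - u‖ ^ 2)) (𝓝[>] 0)
      (𝓝 (f u + m / 2 * ‖y - u‖ ^ 2)) := by
    have hcont : Continuous fun t : ℝ => f u + (1 - t) * (m / 2 * ‖y - u‖ ^ 2) := by fun_prop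
    simpa using (hcont.tendsto 0).mono_left nhdsWithin_le_nhds
  exact le_of_tendsto hlim (Filter.mem_of_superset (Ioc_mem_nhdsGT one_pos) hsegment)

theorem ConvexOn.strongConvexOn_add_add_sq_norm_sub {E : Type*} [NormedAddCommGroup E]
    [InnerProductSpace ℝ E] {f w : E → ℝ} {κ : ℝ} (hf : ConvexOn ℝ Set.univ f)
    (hw : ConvexOn ℝ Set.univ fun y => w y + κ / 2 * ‖y‖ ^ 2) (γ : ℝ) (x : E) :
    StrongConvexOn Set.univ (γ - κ) fun y => f y + w y + γ / 2 * ‖y - x‖ ^ 2 := by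
  rw [strongConvexOn_iff_convex]
  have hlin := ((-γ) • innerₛₗ ℝ x).convexOn convex_univ
  refine (((hf.add hw).add hlin).add_const (γ / 2 * ‖x‖ ^ 2)).congr fun y _ => ?_
  simp only [Pi.add_apply, LinearMap.smul_apply, coe_innerₛₗ_apply, smul_eq_mul]
  rw [norm_sub_sq_real, real_inner_comm]
  ring

theorem half_sq_norm_sub_argmin_le {E : Type*} [NormedAddCommGroup E] [InnerProductSpace ℝ E]
    {m w : E → ℝ} {κ γ Lm Lw : ℝ} {x u : E} (hγ : 0 < γ) (hm_conv : ConvexOn ℝ Set.univ m)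
    (hw_conv : ConvexOn ℝ Set.univ fun y => w y + κ / 2 * ‖y‖ ^ 2)
    (hu : ∀ y, m u + w u + γ / 2 * ‖u - x‖ ^ 2 ≤ m y + w y + γ / 2 * ‖y - x‖ ^ 2)
    (hm : m x - m u ≤ Lm * ‖x - u‖) (hw : |w x - w u| ≤ Lw * ‖x - u‖) (y : E) :
    (γ - κ) / 2 * ‖y - u‖ ^ 2
      ≤ m y - m x + (w y - w x) + γ / 2 * ‖y - x‖ ^ 2 + (Lm + Lw) ^ 2 / (2 * γ) := by
  have hstrong := (hm_conv.strongConvexOn_add_add_sq_norm_sub hw_conv γ x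
    ).add_sq_norm_sub_le_of_isMinOn (isMinOn_univ_iff.2 hu) (Set.mem_univ u) (Set.mem_univ y)
  have hyoung : (Lm + Lw) * ‖x - u‖ ≤ γ / 2 * ‖x - u‖ ^ 2 + (Lm + Lw) ^ 2 / (2 * γ) := by
    have hsq : γ / 2 * ‖x - u‖ ^ 2 + (Lm + Lw) ^ 2 / (2 * γ) - (Lm + Lw) * ‖x - u‖
        = (γ * ‖x - u‖ - (Lm + Lw)) ^ 2 / (2 * γ) := by
      field_simp
      ring
    linarith [hsq ▸ (by positivity : 0 ≤ (γ * ‖x - u‖ - (Lm + Lw)) ^ 2 / (2 * γ))]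
  rw [norm_sub_rev u x] at hstrong
  linarith [le_abs_self (w x - w u)]

theorem mul_abs_add_sq (a b x : ℝ) :
    (a * |x| + b) ^ 2 = a ^ 2 * x ^ 2 + 2 * a * b * |x| + b ^ 2 := by
  rw [add_sq, mul_pow, sq_abs]; ring

section Probability

variable {Ω : Type*} [MeasurableSpace Ω] {μ : Measure Ω} {X : Ω → ℝ}

theorem integrable_abs_of_integrable_sq [IsFiniteMeasure μ]
    (hX : Integrable (fun ω => X ω ^ 2) μ) :
    Integrable (fun ω => |X ω|) μ := by
  have hmeas : AEStronglyMeasurable (fun ω => |X ω|) μ := by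
    simpa only [Real.sqrt_sq_eq_abs] using
      Real.continuous_sqrt.comp_aestronglyMeasurable hX.aestronglyMeasurable
  exact ((memLp_two_iff_integrable_sq hmeas).2 (by simpa only [sq_abs] using hX)).integrable
    one_le_two

theorem sq_integral_abs_le_integral_sq [IsProbabilityMeasure μ]
    (hX : Integrable (fun ω => X ω ^ 2) μ) :
    (∫ ω, |X ω| ∂μ) ^ 2 ≤ ∫ ω, X ω ^ 2 ∂μ := by
  have hL2 : MemLp (fun ω => |X ω|) 2 μ :=
    (memLp_two_iff_integrable_sq (integrable_abs_of_integrable_sq hX).aestronglyMeasurable).2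
      (by simpa only [sq_abs] using hX)
  have hvar := variance_nonneg (fun ω => |X ω|) μ
  rw [variance_eq_sub hL2] at hvar
  simpa [sq_abs] using hvar

theorem integrable_mul_abs_add_sq [IsFiniteMeasure μ]
    (hX : Integrable (fun ω => X ω ^ 2) μ) (a b : ℝ) :
    Integrable (fun ω => (a * |X ω| + b) ^ 2) μ := by
  simp only [mul_abs_add_sq]
  exact ((hX.const_mul _).add ((integrable_abs_of_integrable_sq hX).const_mul _)).add
    (integrable_const _)

theorem integral_mul_abs_add_sq_le [IsProbabilityMeasure μ] {a b L : ℝ}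
    (ha : 0 ≤ a) (hb : 0 ≤ b) (hL : 0 ≤ L)
    (hX : Integrable (fun ω => X ω ^ 2) μ) (hXL : ∫ ω, X ω ^ 2 ∂μ ≤ L ^ 2) :
    ∫ ω, (a * |X ω| + b) ^ 2 ∂μ ≤ (a * L + b) ^ 2 := by
  have habs := integrable_abs_of_integrable_sq hX
  have hmean : ∫ ω, |X ω| ∂μ ≤ L :=
    abs_le_of_sq_le_sq' ((sq_integral_abs_le_integral_sq hX).trans hXL) hL |>.2
  simp only [mul_abs_add_sq]
  have hsum : Integrable (fun ω => a ^ 2 * X ω ^ 2 + 2 * a * b * |X ω|) μ :=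
    (hX.const_mul _).add (habs.const_mul _)
  rw [integral_add hsum (integrable_const _), integral_add (hX.const_mul _) (habs.const_mul _),
    integral_const_mul, integral_const_mul, integral_const, probReal_univ, one_smul]
  nlinarith [mul_nonneg ha hb, sq_nonneg a]

theorem integral_le_const_add_mul_integral [IsProbabilityMeasure μ] {h g : Ω → ℝ} {a c : ℝ}
    (hh : Integrable h μ) (hg : Integrable g μ)
    (hle : ∀ ω, h ω ≤ a + c * g ω) :
    ∫ ω, h ω ∂μ ≤ a + c * ∫ ω, g ω ∂μ :=
  calc ∫ ω, h ω ∂μ ≤ ∫ ω, (a + c * g ω) ∂μ :=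
        integral_mono hh ((integrable_const a).add (hg.const_mul c)) hle
    _ = a + c * ∫ ω, g ω ∂μ := by
        rw [integral_add (integrable_const a) (hg.const_mul c), integral_const_mul]
        simp

end Probability

theorem one_step_descent_generalized_lipschitz_general
    {n : ℕ} {S : Type*} [MeasurableSpace S] (μ : Measure S) [IsProbabilityMeasure μ]
    (f w ψ : EuclideanSpace ℝ (Fin n) → ℝ)
    (fmod : EuclideanSpace ℝ (Fin n) → EuclideanSpace ℝ (Fin n) → S → ℝ)
    (Lfs : S → ℝ) (G : ℝ → ℝ) (κ τ ρ γ Lf Lw : ℝ)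
    (prox : EuclideanSpace ℝ (Fin n) → EuclideanSpace ℝ (Fin n))
    (moreau : EuclideanSpace ℝ (Fin n) → ℝ)
    -- basic parameter assumptions
    (hκ : 0 ≤ κ) (hτ : 0 ≤ τ) (hρ : κ + τ < ρ) (hγ : ρ < γ)
    (hLf : 0 ≤ Lf) (hLw : 0 ≤ Lw)
    -- composite objective
    (hψdef : ∀ x, ψ x = f x + w x)
    -- A2: `w` is κ-weakly convex and L_ω-Lipschitz
    (hw_weak : ConvexOn ℝ Set.univ (fun x => w x + κ / 2 * ‖x‖ ^ 2))
    (hw_lip : ∀ x y, |w x - w y| ≤ Lw * ‖x - y‖)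
    -- A3: properties of the stochastic model
    (hmodel_conv : ∀ x s, ConvexOn ℝ Set.univ (fun y => fmod x y s))
    (hmodel_int : ∀ x y, Integrable (fun s => fmod x y s) μ)
    (hmodel_center : ∀ x, ∫ s, fmod x x s ∂μ = f x)
    (hmodel_acc : ∀ x y, (∫ s, fmod x y s ∂μ) - f y ≤ τ / 2 * ‖x - y‖ ^ 2)
    -- C1: generalized Lipschitz continuity with growth function 𝒢
    (hG_nonneg : ∀ t, 0 ≤ G t)
    (hC1 : ∀ x y z s, fmod x y s - fmod x z s ≤ Lfs s * G ‖x‖ * ‖y - z‖)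
    (hLfs_int : Integrable (fun s => Lfs s ^ 2) μ)
    (hLfs_bound : ∫ s, Lfs s ^ 2 ∂μ ≤ Lf ^ 2)
    -- Moreau envelope `ψ_{1/ρ}` and proximal mapping `prox = prox_{ψ/ρ}`
    (hprox : ∀ x z, ψ (prox x) + ρ / 2 * ‖prox x - x‖ ^ 2 ≤ ψ z + ρ / 2 * ‖z - x‖ ^ 2)
    (hmoreau : ∀ x, moreau x = ψ (prox x) + ρ / 2 * ‖prox x - x‖ ^ 2)
    -- the current point and the stochastic one-step update
    (x : EuclideanSpace ℝ (Fin n)) (xplus : S → EuclideanSpace ℝ (Fin n))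
    (hupdate : ∀ s y,
      fmod x (xplus s) s + w (xplus s) + γ / 2 * ‖xplus s - x‖ ^ 2
        ≤ fmod x y s + w y + γ / 2 * ‖y - x‖ ^ 2)
    (hint : Integrable (fun s => moreau (xplus s)) μ) :
    ∫ s, moreau (xplus s) ∂μ
      ≤ moreau x - ρ * (ρ - τ - κ) / (2 * (γ - κ)) * ‖prox x - x‖ ^ 2
        + ρ * (G ‖x‖ * Lf + Lw) ^ 2 / (2 * γ * (γ - κ)) := by
  have hγκ : 0 < γ - κ := by linarith
  have hγ0 : 0 < γ := by linarith
  have hc : 0 ≤ ρ / (γ - κ) := div_nonneg (by linarith) hγκ.le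
  have hcγ : ρ / (γ - κ) * (γ - κ) = ρ := div_mul_cancel₀ ρ hγκ.ne'
  set xh := prox x
  set g : S → ℝ := fun s =>
    fmod x xh s - fmod x x s + (G ‖x‖ * |Lfs s| + Lw) ^ 2 / (2 * γ) with hg_def
  have hpoint : ∀ s, moreau (xplus s)
      ≤ ψ xh + ρ / (γ - κ) * (w xh - w x + γ / 2 * ‖xh - x‖ ^ 2) + ρ / (γ - κ) * g s := by
    intro s
    have hm : fmod x x s - fmod x (xplus s) s ≤ G ‖x‖ * |Lfs s| * ‖x - xplus s‖ :=
      (hC1 x x (xplus s) s).trans <| by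
        rw [mul_comm (Lfs s)]; gcongr; exacts [hG_nonneg _, le_abs_self _]
    have hstep := half_sq_norm_sub_argmin_le (m := fun y => fmod x y s) hγ0 (hmodel_conv x s)
      hw_weak (hupdate s) hm (hw_lip x (xplus s)) xh
    have hmoreau_le : moreau (xplus s) ≤ ψ xh + ρ / 2 * ‖xh - xplus s‖ ^ 2 :=
      hmoreau _ ▸ hprox _ _
    rw [hg_def]
    linear_combination hmoreau_le + mul_le_mul_of_nonneg_left hstep hc
      - ‖xh - xplus s‖ ^ 2 / 2 * hcγ
  have hdiff_int : Integrable (fun s => fmod x xh s - fmod x x s) μ :=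
    (hmodel_int x xh).sub (hmodel_int x x)
  have hB_int : Integrable (fun s => (G ‖x‖ * |Lfs s| + Lw) ^ 2 / (2 * γ)) μ :=
    (integrable_mul_abs_add_sq hLfs_int _ _).div_const _
  have hg_le : ∫ s, g s ∂μ
      ≤ f xh - f x + τ / 2 * ‖xh - x‖ ^ 2 + (G ‖x‖ * Lf + Lw) ^ 2 / (2 * γ) := by
    rw [hg_def, integral_add hdiff_int hB_int, integral_sub (hmodel_int x xh) (hmodel_int x x),
      integral_div, hmodel_center]
    have hacc := hmodel_acc x xh
    have hB := integral_mul_abs_add_sq_le (hG_nonneg ‖x‖) hLw hLf hLfs_int hLfs_bound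
    rw [norm_sub_rev] at hacc
    gcongr ?_ + ?_ / _
    linarith
  have hmean := integral_le_const_add_mul_integral hint (hdiff_int.add hB_int) hpoint
  have hprox_x : ψ xh + ρ / 2 * ‖xh - x‖ ^ 2 ≤ ψ x := by simpa using hprox x x
  have hdesc := mul_le_mul_of_nonneg_left (hψdef x ▸ hψdef xh ▸ hprox_x) hc
  have hmodel := mul_le_mul_of_nonneg_left hg_le hc
  rw [hmoreau x, show ρ * (ρ - τ - κ) / (2 * (γ - κ)) = ρ / (γ - κ) * ((ρ - τ - κ) / 2) by
      field_simp, show ρ * (G ‖x‖ * Lf + Lw) ^ 2 / (2 * γ * (γ - κ))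
      = ρ / (γ - κ) * ((G ‖x‖ * Lf + Lw) ^ 2 / (2 * γ)) by field_simp]
  linear_combination hmean + hmodel + hdesc + ‖xh - x‖ ^ 2 / 2 * hcγ

/-- **Lemma 2** (one-step descent under generalized Lipschitz continuity).
Here the models satisfy assumption C1: `fmod x y s - fmod x z s ≤ L_f(s) 𝒢(‖x‖) ‖y - z‖`
for a continuous non-decreasing nonnegative growth function `𝒢`. With `ρ > κ + τ`, `γ > ρ`
(deterministic, independent of the sample), and `x⁺(ξ)` the minimizer of the regularized
model at `x`, one has
`E_ξ[ψ_{1/ρ}(x⁺(ξ))] ≤ ψ_{1/ρ}(x) - ρ(ρ-τ-κ)/(2(γ-κ)) ‖x̂-x‖²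
  + ρ(𝒢(‖x‖)L_f + L_ω)²/(2γ(γ-κ))`. -/
theorem one_step_descent_generalized_lipschitz
    {n : ℕ} {S : Type*} [MeasurableSpace S] (μ : Measure S) [IsProbabilityMeasure μ]
    (f w ψ : EuclideanSpace ℝ (Fin n) → ℝ)
    (fmod : EuclideanSpace ℝ (Fin n) → EuclideanSpace ℝ (Fin n) → S → ℝ)
    (Lfs : S → ℝ) (G : ℝ → ℝ) (κ τ ρ γ Lf Lw : ℝ)
    (prox : EuclideanSpace ℝ (Fin n) → EuclideanSpace ℝ (Fin n))
    (moreau : EuclideanSpace ℝ (Fin n) → ℝ)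
    -- basic parameter assumptions
    (hκ : 0 ≤ κ) (hτ : 0 ≤ τ) (hρ : κ + τ < ρ) (hγ : ρ < γ)
    (hLf : 0 ≤ Lf) (hLw : 0 ≤ Lw)
    -- composite objective
    (hψdef : ∀ x, ψ x = f x + w x)
    -- A2: `w` is κ-weakly convex and L_ω-Lipschitz
    (hw_weak : ConvexOn ℝ Set.univ (fun x => w x + κ / 2 * ‖x‖ ^ 2))
    (hw_lip : ∀ x y, |w x - w y| ≤ Lw * ‖x - y‖)
    -- A3: properties of the stochastic model
    (hmodel_conv : ∀ x s, ConvexOn ℝ Set.univ (fun y => fmod x y s))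
    (hmodel_int : ∀ x y, Integrable (fun s => fmod x y s) μ)
    (hmodel_center : ∀ x, ∫ s, fmod x x s ∂μ = f x)
    (hmodel_acc : ∀ x y, (∫ s, fmod x y s ∂μ) - f y ≤ τ / 2 * ‖x - y‖ ^ 2)
    -- C1: generalized Lipschitz continuity with growth function 𝒢
    (hG_nonneg : ∀ t, 0 ≤ G t) (hG_mono : Monotone G) (hG_cont : Continuous G)
    (hC1 : ∀ x y z s, fmod x y s - fmod x z s ≤ Lfs s * G ‖x‖ * ‖y - z‖)
    (hLfs_int : Integrable (fun s => Lfs s ^ 2) μ)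
    (hLfs_bound : ∫ s, Lfs s ^ 2 ∂μ ≤ Lf ^ 2)
    -- Moreau envelope `ψ_{1/ρ}` and proximal mapping `prox = prox_{ψ/ρ}`
    (hprox : ∀ x z, ψ (prox x) + ρ / 2 * ‖prox x - x‖ ^ 2 ≤ ψ z + ρ / 2 * ‖z - x‖ ^ 2)
    (hmoreau : ∀ x, moreau x = ψ (prox x) + ρ / 2 * ‖prox x - x‖ ^ 2)
    -- the current point and the stochastic one-step update
    (x : EuclideanSpace ℝ (Fin n)) (xplus : S → EuclideanSpace ℝ (Fin n))
    (hupdate : ∀ s y,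
      fmod x (xplus s) s + w (xplus s) + γ / 2 * ‖xplus s - x‖ ^ 2
        ≤ fmod x y s + w y + γ / 2 * ‖y - x‖ ^ 2)
    (hint : Integrable (fun s => moreau (xplus s)) μ) :
    ∫ s, moreau (xplus s) ∂μ
      ≤ moreau x - ρ * (ρ - τ - κ) / (2 * (γ - κ)) * ‖prox x - x‖ ^ 2
        + ρ * (G ‖x‖ * Lf + Lw) ^ 2 / (2 * γ * (γ - κ)) :=
  one_step_descent_generalized_lipschitz_general μ f w ψ fmod Lfs G κ τ ρ γ Lf Lw prox moreau hκ hτ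
    hρ hγ hLf hLw hψdef hw_weak hw_lip hmodel_conv hmodel_int hmodel_center hmodel_acc hG_nonneg hC1
    hLfs_int hLfs_bound hprox hmoreau x xplus hupdate hint
end

section
/- Bounded expected displacement under the adaptive stepsize: Let ρ > κ + τ and run x^{k+1} = argmin_x { f_{x^k}(x,ξ^k) + ω(x) + (γ_k/2)‖x − x^k‖² } with i.i.d. samples ξ^k ∼ Ξ and γ_k = ρ + κ + τ + α(𝒢(‖x^k‖) + 1)√K for some α > 0. Then for every 2 ≤ k ≤ K, the conditional expectation of the step length satisfies E_k[‖x^{k+1} − x^k‖] ≤ 2(L_f + L_ω)/(α√K), where E_k denotes expectation over ξ^k conditioned on ξ¹,…,ξ^{k−1}. -/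
/-!
Comparing the proximal step with the candidate `y = x^k` gives
`(γ_k/2)‖x^{k+1} - x^k‖² ≤ (L_f(ξ)𝒢(‖x^k‖) + L_ω)‖x^{k+1} - x^k‖`,
by the Lipschitz bounds on the model and on `ω`. Dividing by the step length and integrating
over the fresh sample bounds the expected step by `2(L_f 𝒢(‖x^k‖) + L_ω)/γ_k`, using
`E[L_f(ξ)] ≤ √E[L_f(ξ)²] ≤ L_f`. The adaptive stepsize satisfies
`γ_k ≥ α(𝒢(‖x^k‖) + 1)√K`, which absorbs the growth factor.
-/

open MeasureTheory ProbabilityTheory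

lemma memLp_two_of_nonneg_of_integrable_sq {Ω : Type*} [MeasurableSpace Ω] {μ : Measure Ω}
    {X : Ω → ℝ} (hX : ∀ ω, 0 ≤ X ω) (hX2 : Integrable (fun ω => X ω ^ 2) μ) :
    MemLp X 2 μ := by
  have hsqrt : (fun ω => √(X ω ^ 2)) = X := funext fun ω => Real.sqrt_sq (hX ω)
  have hmeas : AEStronglyMeasurable X μ :=
    hsqrt ▸ Real.continuous_sqrt.comp_aestronglyMeasurable hX2.aestronglyMeasurable
  exact (memLp_two_iff_integrable_sq hmeas).2 hX2

lemma integral_le_of_integral_sq_le {Ω : Type*} [MeasurableSpace Ω] {μ : Measure Ω}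
    [IsProbabilityMeasure μ] {X : Ω → ℝ} {c : ℝ} (hX : MemLp X 2 μ) (hc : 0 ≤ c)
    (h : ∫ ω, X ω ^ 2 ∂μ ≤ c ^ 2) : ∫ ω, X ω ∂μ ≤ c := by
  have hvar : 0 ≤ ∫ ω, X ω ^ 2 ∂μ - (∫ ω, X ω ∂μ) ^ 2 :=
    variance_eq_sub hX ▸ variance_nonneg X μ
  exact le_of_sq_le_sq (by linarith) hc

lemma integral_le_of_le_mul_add {Ω : Type*} [MeasurableSpace Ω] {μ : Measure Ω}
    [IsProbabilityMeasure μ] {D L : Ω → ℝ} {a b c : ℝ} (hD : ∀ ω, 0 ≤ D ω)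
    (hDL : ∀ ω, D ω ≤ a * L ω + b) (ha : 0 ≤ a) (hL : MemLp L 2 μ) (hc : 0 ≤ c)
    (hL2 : ∫ ω, L ω ^ 2 ∂μ ≤ c ^ 2) : ∫ ω, D ω ∂μ ≤ a * c + b := by
  have hL1 : Integrable L μ := hL.integrable one_le_two
  calc ∫ ω, D ω ∂μ ≤ ∫ ω, a * L ω + b ∂μ :=
        integral_mono_of_nonneg (.of_forall hD) ((hL1.const_mul a).add (integrable_const b))
          (.of_forall hDL)
    _ = a * ∫ ω, L ω ∂μ + b := by
        rw [integral_add (hL1.const_mul a) (integrable_const b), integral_const_mul,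
          integral_const, probReal_univ, one_smul]
    _ ≤ a * c + b := by
        gcongr
        exact integral_le_of_integral_sq_le hL hc hL2

lemma norm_sub_le_of_prox_step {E : Type*} [SeminormedAddCommGroup E] {m r : E → ℝ}
    {x z : E} {γ Lm Lr : ℝ} (hγ : 0 < γ) (hLm : 0 ≤ Lm) (hLr : 0 ≤ Lr)
    (hm : m x - m z ≤ Lm * ‖x - z‖) (hr : |r x - r z| ≤ Lr * ‖x - z‖)
    (hopt : m z + r z + γ / 2 * ‖z - x‖ ^ 2 ≤ m x + r x + γ / 2 * ‖x - x‖ ^ 2) :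
    ‖z - x‖ ≤ 2 * (Lm + Lr) / γ := by
  rw [sub_self, norm_zero, zero_pow two_ne_zero, mul_zero, add_zero] at hopt
  rw [norm_sub_rev] at hm hr
  have hr' := (abs_le.1 hr).2
  rw [le_div_iff₀ hγ]
  rcases (norm_nonneg (z - x)).eq_or_lt with hzero | hpos
  · rw [← hzero, zero_mul]
    positivity
  · nlinarith

lemma mul_add_div_le_of_mul_add_one_le {a b g c γ : ℝ} (ha : 0 ≤ a) (hb : 0 ≤ b)
    (hg : 0 ≤ g) (hc : 0 < c) (hγ : c * (g + 1) ≤ γ) : (a * g + b) / γ ≤ (a + b) / c :=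
  calc (a * g + b) / γ ≤ (a + b) * (g + 1) / (c * (g + 1)) :=
        div_le_div₀ (by positivity) (by nlinarith) (by positivity) hγ
    _ = (a + b) / c := mul_div_mul_right _ _ (by positivity)

/-- The iterates are represented in prefix form: `X k ω` is the iterate `x^{k+1}` produced from
the first `k` samples `ω : Fin k → S` (so `x¹ = X 0`), and `X (k+1) (Fin.snoc ω s)` is the
proximal step taken from it with the fresh sample `s`. The conditional expectation `E_k` is the
integral over `s` with the past `ω` fixed, and `2 ≤ k ≤ K` becomes `1 ≤ k < K`. -/
theorem bounded_expected_displacement_general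
    {n : ℕ} {S : Type*} [MeasurableSpace S] (μ : Measure S) [IsProbabilityMeasure μ]
    (w : EuclideanSpace ℝ (Fin n) → ℝ)
    (fmod : EuclideanSpace ℝ (Fin n) → EuclideanSpace ℝ (Fin n) → S → ℝ)
    (Lfs : S → ℝ) (G : ℝ → ℝ) (κ τ ρ Lf Lw α : ℝ)
    -- basic parameter assumptions
    (hκ : 0 ≤ κ) (hτ : 0 ≤ τ) (hρ : κ + τ < ρ) (hα : 0 < α)
    (hLf : 0 ≤ Lf) (hLw : 0 ≤ Lw)
    -- A2: `w` is κ-weakly convex and L_ω-Lipschitz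
    (hw_lip : ∀ x y, |w x - w y| ≤ Lw * ‖x - y‖)
    -- C1: generalized Lipschitz continuity with growth function 𝒢
    (hG_nonneg : ∀ t, 0 ≤ G t)
    (hC1 : ∀ x y z s, fmod x y s - fmod x z s ≤ Lfs s * G ‖x‖ * ‖y - z‖)
    (hLfs_nonneg : ∀ s, 0 ≤ Lfs s)
    (hLfs_int : Integrable (fun s => Lfs s ^ 2) μ)
    (hLfs_bound : ∫ s, Lfs s ^ 2 ∂μ ≤ Lf ^ 2)
    -- the algorithm in prefix form: `X k` is a function of the first `k` samples
    (K : ℕ)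
    (X : (k : ℕ) → (Fin k → S) → EuclideanSpace ℝ (Fin n))
    (hupdate : ∀ (k : ℕ) (ω : Fin k → S) (s : S) (y : EuclideanSpace ℝ (Fin n)),
      fmod (X k ω) (X (k + 1) (Fin.snoc ω s)) s + w (X (k + 1) (Fin.snoc ω s))
          + (ρ + κ + τ + α * (G ‖X k ω‖ + 1) * Real.sqrt K) / 2
              * ‖X (k + 1) (Fin.snoc ω s) - X k ω‖ ^ 2
        ≤ fmod (X k ω) y s + w y
          + (ρ + κ + τ + α * (G ‖X k ω‖ + 1) * Real.sqrt K) / 2 * ‖y - X k ω‖ ^ 2) :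
    ∀ (k : ℕ), 1 ≤ k → k < K → ∀ ω : Fin k → S,
      (∫ s, ‖X (k + 1) (Fin.snoc ω s) - X k ω‖ ∂μ)
        ≤ 2 * (Lf + Lw) / (α * Real.sqrt K) := by
  intro k _ hkK ω
  set x := X k ω
  set g := G ‖x‖
  set γ := ρ + κ + τ + α * (g + 1) * Real.sqrt K
  have hg : 0 ≤ g := hG_nonneg _
  have hsqrtK : 0 < Real.sqrt K := Real.sqrt_pos.2 (by exact_mod_cast k.zero_le.trans_lt hkK)
  have hγ : α * Real.sqrt K * (g + 1) ≤ γ := by linarith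
  have hγ_pos : 0 < γ := lt_of_lt_of_le (by positivity) hγ
  have hstep (s : S) : ‖X (k + 1) (Fin.snoc ω s) - x‖ ≤ 2 * (Lfs s * g + Lw) / γ :=
    norm_sub_le_of_prox_step (m := fun y => fmod x y s) hγ_pos (mul_nonneg (hLfs_nonneg s) hg)
      hLw (hC1 x x _ s) (hw_lip x _) (hupdate k ω s x)
  calc (∫ s, ‖X (k + 1) (Fin.snoc ω s) - x‖ ∂μ)
      ≤ 2 * g / γ * Lf + 2 * Lw / γ :=
        integral_le_of_le_mul_add (fun _ => norm_nonneg _) (fun s => (hstep s).trans_eq (by ring))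
          (by positivity) (memLp_two_of_nonneg_of_integrable_sq hLfs_nonneg hLfs_int) hLf
          hLfs_bound
    _ = 2 * ((Lf * g + Lw) / γ) := by ring
    _ ≤ 2 * ((Lf + Lw) / (α * Real.sqrt K)) := by
        gcongr 2 * ?_
        exact mul_add_div_le_of_mul_add_one_le hLf hLw hg (by positivity) hγ
    _ = 2 * (Lf + Lw) / (α * Real.sqrt K) := (mul_div_assoc _ _ _).symm

/-- **Lemma 2.22** (bounded expected displacement under the adaptive stepsize).
The iterates are represented in prefix form: `X k ω` is the iterate `x^{k+1}` produced from
the first `k` samples `ω : Fin k → S` (so `x¹ = X 0`), and `X (k+1) (Fin.snoc ω s)`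
minimizes the regularized stochastic model built at `X k ω` with sample `s`, with
adaptive stepsize `γ_k = ρ + κ + τ + α(𝒢(‖x^k‖)+1)√K`.  Then for every `2 ≤ k ≤ K`
(i.e. every prefix index `1 ≤ j ≤ K-1`) and every realization of the past, the
conditional expectation of the step length satisfies
`E_k[‖x^{k+1} - x^k‖] ≤ 2(L_f + L_ω)/(α√K)`. -/
theorem bounded_expected_displacement
    {n : ℕ} {S : Type*} [MeasurableSpace S] (μ : Measure S) [IsProbabilityMeasure μ]
    (f w ψ : EuclideanSpace ℝ (Fin n) → ℝ)
    (fmod : EuclideanSpace ℝ (Fin n) → EuclideanSpace ℝ (Fin n) → S → ℝ)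
    (Lfs : S → ℝ) (G : ℝ → ℝ) (κ τ ρ Lf Lw α : ℝ)
    -- basic parameter assumptions
    (hκ : 0 ≤ κ) (hτ : 0 ≤ τ) (hρ : κ + τ < ρ) (hα : 0 < α)
    (hLf : 0 ≤ Lf) (hLw : 0 ≤ Lw)
    -- composite objective
    (hψdef : ∀ x, ψ x = f x + w x)
    -- A2: `w` is κ-weakly convex and L_ω-Lipschitz
    (hw_weak : ConvexOn ℝ Set.univ (fun x => w x + κ / 2 * ‖x‖ ^ 2))
    (hw_lip : ∀ x y, |w x - w y| ≤ Lw * ‖x - y‖)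
    -- A3: properties of the stochastic model
    (hmodel_conv : ∀ x s, ConvexOn ℝ Set.univ (fun y => fmod x y s))
    (hmodel_int : ∀ x y, Integrable (fun s => fmod x y s) μ)
    (hmodel_center : ∀ x, ∫ s, fmod x x s ∂μ = f x)
    (hmodel_acc : ∀ x y, (∫ s, fmod x y s ∂μ) - f y ≤ τ / 2 * ‖x - y‖ ^ 2)
    -- C1: generalized Lipschitz continuity with growth function 𝒢
    (hG_nonneg : ∀ t, 0 ≤ G t) (hG_mono : Monotone G) (hG_cont : Continuous G)
    (hC1 : ∀ x y z s, fmod x y s - fmod x z s ≤ Lfs s * G ‖x‖ * ‖y - z‖)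
    (hLfs_nonneg : ∀ s, 0 ≤ Lfs s)
    (hLfs_int : Integrable (fun s => Lfs s ^ 2) μ)
    (hLfs_bound : ∫ s, Lfs s ^ 2 ∂μ ≤ Lf ^ 2)
    -- the algorithm in prefix form: `X k` is a function of the first `k` samples
    (K : ℕ) (hK : 1 ≤ K)
    (X : (k : ℕ) → (Fin k → S) → EuclideanSpace ℝ (Fin n))
    (hupdate : ∀ (k : ℕ) (ω : Fin k → S) (s : S) (y : EuclideanSpace ℝ (Fin n)),
      fmod (X k ω) (X (k + 1) (Fin.snoc ω s)) s + w (X (k + 1) (Fin.snoc ω s))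
          + (ρ + κ + τ + α * (G ‖X k ω‖ + 1) * Real.sqrt K) / 2
              * ‖X (k + 1) (Fin.snoc ω s) - X k ω‖ ^ 2
        ≤ fmod (X k ω) y s + w y
          + (ρ + κ + τ + α * (G ‖X k ω‖ + 1) * Real.sqrt K) / 2 * ‖y - X k ω‖ ^ 2)
    -- integrability of the step length over the fresh sample
    (hstep_int : ∀ (k : ℕ) (ω : Fin k → S),
      Integrable (fun s => ‖X (k + 1) (Fin.snoc ω s) - X k ω‖) μ) :
    ∀ (k : ℕ), 1 ≤ k → k < K → ∀ ω : Fin k → S,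
      (∫ s, ‖X (k + 1) (Fin.snoc ω s) - X k ω‖ ∂μ)
        ≤ 2 * (Lf + Lw) / (α * Real.sqrt K) :=
  bounded_expected_displacement_general μ w fmod Lfs G κ τ ρ Lf Lw α hκ hτ hρ hα hLf hLw hw_lip
    hG_nonneg hC1 hLfs_nonneg hLfs_int hLfs_bound K X hupdate
end

section
/- Clipped ratio bound for independent random variables (squared version): Let X and Y be independent nonnegative real-valued random variables with E[|X − Y|²] ≤ σ², and let α > 0. Then E[ X² / max{Y², α²} ] ≤ ((σ + α)/α)². -/
/-! Since `|X| ≤ |X - Y| + |Y|`, pointwise `X² / max (Y², α²) ≤ (|X - Y| + α)² / α²`.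
The mean of `(|X - Y| + α)²` is at most `(σ + α)²` because `E|X - Y| ≤ σ`, which is the
nonnegativity of the variance of `|X - Y|`. -/

open MeasureTheory ProbabilityTheory

lemma sq_div_max_sq_le_abs_sub_add_sq_div_sq {x y α : ℝ} (hα : 0 < α) :
    x ^ 2 / max (y ^ 2) (α ^ 2) ≤ (|x - y| + α) ^ 2 / α ^ 2 := by
  have hmax : max (y ^ 2) (α ^ 2) = max |y| α ^ 2 := by
    rw [← sq_abs y]
    rcases le_total |y| α with h | h
    · rw [max_eq_right h, max_eq_right (pow_le_pow_left₀ (abs_nonneg y) h 2)]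
    · rw [max_eq_left h, max_eq_left (pow_le_pow_left₀ hα.le h 2)]
  set m := max |y| α
  have hαm : α ≤ m := le_max_right _ _
  have hm : 0 < m := hα.trans_le hαm
  have hratio : |x| / m ≤ (|x - y| + α) / α :=
    calc |x| / m ≤ (|x - y| + |y|) / m := by
          gcongr; linarith [abs_sub_abs_le_abs_sub x y]
      _ = |x - y| / m + |y| / m := add_div _ _ _
      _ ≤ |x - y| / α + 1 := by
          gcongr
          exact div_le_one_of_le₀ (le_max_left _ _) hm.le
      _ = (|x - y| + α) / α := by field_simp
  rw [hmax, ← sq_abs x, ← div_pow, ← div_pow]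
  exact pow_le_pow_left₀ (by positivity) hratio 2

lemma memLp_two_abs_of_integrable_abs_sq {Ω : Type*} [MeasurableSpace Ω] {μ : Measure Ω}
    {f : Ω → ℝ} (hf : Integrable (fun ω => |f ω| ^ 2) μ) :
    MemLp (fun ω => |f ω|) 2 μ := by
  have hmeas : AEStronglyMeasurable (fun ω => |f ω|) μ :=
    (Real.continuous_sqrt.comp_aestronglyMeasurable hf.aestronglyMeasurable).congr
      (ae_of_all _ fun ω => Real.sqrt_sq (abs_nonneg _))
  exact (memLp_two_iff_integrable_sq hmeas).2 hf

lemma integral_add_const_sq_le {Ω : Type*} [MeasurableSpace Ω] {μ : Measure Ω}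
    [IsProbabilityMeasure μ] {g : Ω → ℝ} {s c : ℝ} (hg : MemLp g 2 μ)
    (hgs : ∫ ω, g ω ^ 2 ∂μ ≤ s ^ 2) (hs : 0 ≤ s) (hc : 0 ≤ c) :
    ∫ ω, (g ω + c) ^ 2 ∂μ ≤ (s + c) ^ 2 := by
  have hmean : ∫ ω, g ω ∂μ ≤ s := by
    have hvar := variance_eq_sub hg
    have hvar_nonneg := variance_nonneg g μ
    refine (abs_le_of_sq_le_sq' ?_ hs).2
    simp only [Pi.pow_apply] at hvar
    linarith
  have hexpand : ∫ ω, (g ω + c) ^ 2 ∂μ = ∫ ω, g ω ^ 2 ∂μ + 2 * c * ∫ ω, g ω ∂μ + c ^ 2 := by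
    have hsq := hg.integrable_sq
    have hlin := (hg.integrable one_le_two).const_mul (2 * c)
    have hpoint : (fun ω => (g ω + c) ^ 2) = fun ω => g ω ^ 2 + 2 * c * g ω + c ^ 2 := by
      ext ω; ring
    rw [hpoint, integral_add (f := fun ω => g ω ^ 2 + 2 * c * g ω) (hsq.add hlin)
      (integrable_const _), integral_add hsq hlin, integral_const_mul, integral_const]
    simp
  rw [hexpand]
  nlinarith

theorem clipped_ratio_bound_sq_general
    {Ω : Type*} [MeasurableSpace Ω] (μ : Measure Ω) [IsProbabilityMeasure μ]
    (X Y : Ω → ℝ) (σ α : ℝ)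
    (hσ : 0 ≤ σ) (hα : 0 < α)
    (hdiff_int : Integrable (fun ω => |X ω - Y ω| ^ 2) μ)
    (hdiff : ∫ ω, |X ω - Y ω| ^ 2 ∂μ ≤ σ ^ 2) :
    ∫ ω, X ω ^ 2 / max (Y ω ^ 2) (α ^ 2) ∂μ ≤ ((σ + α) / α) ^ 2 := by
  have hD : MemLp (fun ω => |X ω - Y ω|) 2 μ := memLp_two_abs_of_integrable_abs_sq hdiff_int
  calc ∫ ω, X ω ^ 2 / max (Y ω ^ 2) (α ^ 2) ∂μ
      ≤ ∫ ω, (|X ω - Y ω| + α) ^ 2 / α ^ 2 ∂μ :=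
        integral_mono_of_nonneg (ae_of_all _ fun ω => by positivity)
          ((hD.add (memLp_const α)).integrable_sq.div_const _)
          (ae_of_all _ fun ω => sq_div_max_sq_le_abs_sub_add_sq_div_sq hα)
    _ = (∫ ω, (|X ω - Y ω| + α) ^ 2 ∂μ) / α ^ 2 := integral_div _ _
    _ ≤ (σ + α) ^ 2 / α ^ 2 := by
        gcongr
        exact integral_add_const_sq_le hD hdiff hσ hα.le
    _ = ((σ + α) / α) ^ 2 := (div_pow _ _ _).symm

/-- **Lemma 3.3, first bound** (clipped ratio bound, squared version).
If `X` and `Y` are independent nonnegative random variables with `E[|X - Y|²] ≤ σ²`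
and `α > 0`, then `E[X² / max{Y², α²}] ≤ ((σ + α)/α)²`. -/
theorem clipped_ratio_bound_sq
    {Ω : Type*} [MeasurableSpace Ω] (μ : Measure Ω) [IsProbabilityMeasure μ]
    (X Y : Ω → ℝ) (σ α : ℝ)
    (hX_meas : Measurable X) (hY_meas : Measurable Y)
    (hX_nonneg : ∀ ω, 0 ≤ X ω) (hY_nonneg : ∀ ω, 0 ≤ Y ω)
    (hindep : ProbabilityTheory.IndepFun X Y μ)
    (hσ : 0 ≤ σ) (hα : 0 < α)
    (hdiff_int : Integrable (fun ω => |X ω - Y ω| ^ 2) μ)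
    (hdiff : ∫ ω, |X ω - Y ω| ^ 2 ∂μ ≤ σ ^ 2) :
    ∫ ω, X ω ^ 2 / max (Y ω ^ 2) (α ^ 2) ∂μ ≤ ((σ + α) / α) ^ 2 :=
  clipped_ratio_bound_sq_general μ X Y σ α hσ hα hdiff_int hdiff
end

section
/- Tail bound on the iterate norm under unknown Lipschitz continuity: Let ρ > κ + τ and run x^{k+1} = argmin_x { f_{x^k}(x,ξ^k) + ω(x) + (γ_k/2)‖x − x^k‖² } with i.i.d. samples ξ^k ∼ Ξ, where at each step an additional independent sample ξ' ∼ Ξ is drawn and γ_k = ρ + τ + κ + max{ Lip(x^k, ξ'), α } √K with α > 0. Then for every a > 0 and every 2 ≤ k ≤ K, P{ ‖x^k‖ ≥ B_{aΔ} + 4(α + σ + L_ω)/(α√K) } ≤ 2Δ/(aΔ + Λ), where Δ = ψ_{1/ρ}(x¹) + Λ + (ρ/α²)(α + σ + L_ω)² > 0. -/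
/-!
A step from `x` to `x⁺` is compared with the proximal point `p = prox_{ψ/ρ}(x)`. The subproblem is
`(γ - κ)`-strongly convex, so its growth at `p`, together with `ψ_{1/ρ}(x⁺) ≤ ψ(p) + ρ/2‖p - x⁺‖²`,
gives
  `ψ_{1/ρ}(x⁺) ≤ ψ_{1/ρ}(x) + θ(ξ') G(ξ) + (3ρ/4) ((Lip(x,ξ) + L_ω) / (max{Lip(x,ξ'), α} √K))²`
with `G(ξ) = f_x(p,ξ) + ω(p) - f_x(x,ξ) - ω(x) + κ/2‖p - x‖²` and `θ(ξ') ∈ [0, 1]`.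
Since `ξ` and `ξ'` are independent, `E[θ G] = E[θ] E[G] ≤ 0` because `ρ > κ + τ`. The reference
sample controls the last term: `(L + L_ω)/max{L', α} ≤ (|L - L'| + L_ω + α)/α`, whose second moment
is at most `(σ + L_ω + α)²/α²` by D2. So each step raises `E ψ_{1/ρ}` by at most
`3ρ(σ + L_ω + α)²/(4α²K)`, whence `E ψ_{1/ρ}(x^k) + Λ ≤ Δ` for `k ≤ K`; Markov's inequality and A7
finish the proof.
-/

open MeasureTheory ProbabilityTheory RealInnerProductSpace Set Filter Topology

section Convexity

variable {E : Type*} [NormedAddCommGroup E] [InnerProductSpace ℝ E]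

theorem ConvexOn.isMinOn_of_forall_le_add_sq_norm_sub {g : E → ℝ}
    (hg : ConvexOn ℝ univ g) {m : ℝ} {u : E} (hu : ∀ y, g u ≤ g y + m / 2 * ‖y - u‖ ^ 2) :
    IsMinOn g univ u := by
  refine isMinOn_univ_iff.2 fun y => ?_
  set c := m / 2 * ‖y - u‖ ^ 2
  have hsmall : ∀ t ∈ Ioc (0 : ℝ) 1, g u ≤ g y + t * c := by
    rintro t ⟨ht0, ht1⟩
    have hconv := hg.2 (mem_univ u) (mem_univ y) (sub_nonneg.2 ht1) ht0.le (by ring)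
    have hmin := hu ((1 - t) • u + t • y)
    rw [show (1 - t) • u + t • y - u = t • (y - u) by module, norm_smul,
      Real.norm_of_nonneg ht0.le] at hmin
    simp only [smul_eq_mul] at hconv
    have : t * g u ≤ t * (g y + t * c) := by linear_combination hmin + hconv
    exact le_of_mul_le_mul_left this ht0
  have hlim : Tendsto (fun t => g y + t * c) (𝓝[>] 0) (𝓝 (g y)) :=
    ((continuous_const.add (continuous_id.mul continuous_const)).tendsto' 0 _
      (by simp)).mono_left nhdsWithin_le_nhds
  exact ge_of_tendsto hlim (eventually_of_mem (Ioc_mem_nhdsGT zero_lt_one) hsmall)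

theorem IsMinOn.add_sq_norm_sub_le {h : E → ℝ} {κ γ : ℝ}
    (hh : ConvexOn ℝ univ fun y => h y + κ / 2 * ‖y‖ ^ 2) {x u : E}
    (hu : IsMinOn (fun y => h y + γ / 2 * ‖y - x‖ ^ 2) univ u) (y : E) :
    h u + γ / 2 * ‖u - x‖ ^ 2 + (γ - κ) / 2 * ‖y - u‖ ^ 2 ≤ h y + γ / 2 * ‖y - x‖ ^ 2 := by
  set g : E → ℝ := fun y => h y + γ / 2 * ‖y - x‖ ^ 2 - (γ - κ) / 2 * ‖y - u‖ ^ 2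
  have hg_eq : g = fun y => (h y + κ / 2 * ‖y‖ ^ 2)
      + (⟪y, (γ - κ) • u - γ • x⟫ + (γ / 2 * ‖x‖ ^ 2 - (γ - κ) / 2 * ‖u‖ ^ 2)) := by
    ext y
    simp only [g, inner_sub_right, real_inner_smul_right, norm_sub_sq_real]
    ring
  have hg : ConvexOn ℝ univ g := by
    rw [hg_eq]
    exact hh.add (((innerₛₗ ℝ).flip _).convexOn convex_univ |>.add_const _)
  have hgu := hg.isMinOn_of_forall_le_add_sq_norm_sub (m := γ - κ) (u := u) fun y => by
    simpa [g] using isMinOn_univ_iff.1 hu y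
  have := isMinOn_univ_iff.1 hgu y
  simp only [g, sub_self, norm_zero] at this
  linarith

theorem sq_norm_sub_le_of_isMinOn {h : E → ℝ} {x xp : E} {ρ τ κ M L : ℝ}
    (hκ : 0 ≤ κ) (hτ : 0 ≤ τ) (hρ : 0 ≤ ρ) (hM : 0 < M)
    (hh : ConvexOn ℝ univ fun y => h y + κ / 2 * ‖y‖ ^ 2)
    (hxp : IsMinOn (fun y => h y + (ρ + τ + κ + M) / 2 * ‖y - x‖ ^ 2) univ xp)
    (hL : h x - h xp ≤ L * ‖xp - x‖) (p : E) :
    ρ / 2 * ‖p - xp‖ ^ 2 ≤ ρ / 2 * ‖p - x‖ ^ 2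
      + (h p - h x + κ / 2 * ‖p - x‖ ^ 2) * (ρ / (ρ + τ + M)) + 3 / 4 * ρ * (L / M) ^ 2 := by
  have hgrowth := hxp.add_sq_norm_sub_le hh
  have hsplit : ‖p - xp‖ ^ 2 = ‖p - x‖ ^ 2 - 2 * ⟪p - x, xp - x⟫ + ‖xp - x‖ ^ 2 := by
    rw [show p - xp = (p - x) - (xp - x) by abel, norm_sub_sq_real]
  set δ := ‖xp - x‖
  set r := L / M
  have hLr : L = r * M := by simp only [r]; field_simp
  have hMδ : M * δ ^ 2 ≤ L * δ := by
    have h0 := hgrowth x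
    simp only [sub_self, norm_zero, norm_sub_rev x xp] at h0
    nlinarith [sq_nonneg δ]
  -- In `3/4`, `1/2` comes from `‖xp - x‖ ≤ L/M` and `1/4` from AM-GM on the cross term.
  have hδ : δ ^ 2 ≤ r ^ 2 := by
    rw [hLr] at hMδ
    have : δ ^ 2 ≤ r * δ := le_of_mul_le_mul_left (by linarith) hM
    nlinarith [sq_nonneg (r - δ), norm_nonneg (xp - x)]
  have hcross : -((ρ + τ + M) * ⟪p - x, xp - x⟫)
      ≤ h p - h x + κ / 2 * ‖p - x‖ ^ 2 + M * r ^ 2 / 4 := by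
    have h1 := hgrowth p
    rw [hsplit] at h1
    rw [hLr] at hL
    nlinarith [mul_nonneg hM.le (sq_nonneg (r - 2 * δ)),
      mul_nonneg (by linarith : 0 ≤ ρ + τ + κ / 2) (sq_nonneg δ)]
  have hθ : 0 ≤ ρ / (ρ + τ + M) := by positivity
  have hθM : ρ / (ρ + τ + M) * M ≤ ρ := by
    rw [div_mul_eq_mul_div, div_le_iff₀ (by positivity)]; nlinarith
  have hθρ : ρ / (ρ + τ + M) * (ρ + τ + M) = ρ := div_mul_cancel₀ _ (by positivity)
  rw [hsplit]
  linarith [mul_le_mul_of_nonneg_left hcross hθ, mul_le_mul_of_nonneg_right hθM (sq_nonneg r),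
    congrArg (· * ⟪p - x, xp - x⟫) hθρ, mul_le_mul_of_nonneg_left hδ (by positivity : 0 ≤ ρ / 2)]

end Convexity

theorem div_max_mul_le {L₁ L₂ Lw α β : ℝ} (hα : 0 < α) (hβ : 0 < β) (hLw : 0 ≤ Lw) :
    (L₁ + Lw) / (max L₂ α * β) ≤ (|L₁ - L₂| + (Lw + α)) / (α * β) := by
  have hmax : α ≤ max L₂ α := le_max_right _ _
  rw [div_le_div_iff₀ (by positivity) (by positivity)]
  have h1 : α * L₁ ≤ α * L₂ + α * |L₁ - L₂| := by
    nlinarith [le_abs_self (L₁ - L₂)]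
  have h2 : α * L₂ ≤ max L₂ α * α := by nlinarith [le_max_left L₂ α]
  nlinarith [mul_le_mul_of_nonneg_right hmax (abs_nonneg (L₁ - L₂)),
    mul_le_mul_of_nonneg_right hmax hLw]

section Probability

variable {Ω : Type*} [MeasurableSpace Ω] {ν : Measure Ω} [IsProbabilityMeasure ν]

theorem sq_integral_le_integral_sq {u : Ω → ℝ} (hu : MemLp u 2 ν) :
    (∫ ω, u ω ∂ν) ^ 2 ≤ ∫ ω, u ω ^ 2 ∂ν := by
  have := variance_nonneg u ν
  rw [variance_eq_sub hu] at this
  simpa using this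

theorem integral_abs_add_sq_le {u : Ω → ℝ} (hu : MemLp u 2 ν) {a σ : ℝ} (ha : 0 ≤ a)
    (hσ : 0 ≤ σ) (huσ : ∫ ω, u ω ^ 2 ∂ν ≤ σ ^ 2) :
    ∫ ω, (|u ω| + a) ^ 2 ∂ν ≤ (σ + a) ^ 2 := by
  have hsq : Integrable (fun ω => u ω ^ 2) ν := hu.integrable_sq
  have habs : Integrable (fun ω => |u ω|) ν := (hu.integrable one_le_two).abs
  have hmean : ∫ ω, |u ω| ∂ν ≤ σ := by
    have := sq_integral_le_integral_sq hu.abs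
    simp only [Pi.abs_apply, sq_abs] at this
    nlinarith [(integral_nonneg fun ω => abs_nonneg (u ω) : 0 ≤ ∫ ω, |u ω| ∂ν)]
  have hexpand : ∫ ω, (|u ω| + a) ^ 2 ∂ν = ∫ ω, u ω ^ 2 ∂ν + 2 * a * ∫ ω, |u ω| ∂ν + a ^ 2 := by
    have hpoint : (fun ω => (|u ω| + a) ^ 2) = fun ω => u ω ^ 2 + 2 * a * |u ω| + a ^ 2 := by
      ext ω; rw [add_sq, sq_abs]; ring
    rw [hpoint, integral_add (f := fun ω => u ω ^ 2 + 2 * a * |u ω|)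
      (hsq.add (habs.const_mul _)) (integrable_const _),
      integral_add hsq (habs.const_mul _), integral_const_mul]
    simp
  rw [hexpand]
  nlinarith

theorem integrable_div_add_max_mul {g : Ω → ℝ} (hg : AEMeasurable g ν) {ρ τ α β : ℝ}
    (hρ : 0 ≤ ρ) (hτ : 0 ≤ τ) (hα : 0 < α) (hβ : 0 < β) :
    Integrable (fun ω => ρ / (ρ + τ + max (g ω) α * β)) ν := by
  refine Integrable.of_bound (by fun_prop : AEMeasurable _ ν).aestronglyMeasurable 1
    (Eventually.of_forall fun ω => ?_)
  have hM : 0 < max (g ω) α * β := mul_pos (hα.trans_le (le_max_right _ _)) hβ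
  rw [Real.norm_of_nonneg (by positivity), div_le_one (by positivity)]
  linarith

theorem meas_ge_le_ofReal_integral_add_div {g : Ω → ℝ} {Λ t : ℝ} (hg : ∀ ω, -Λ ≤ g ω)
    (hgi : Integrable g ν) (ht : 0 < t + Λ) :
    ν {ω | t ≤ g ω} ≤ ENNReal.ofReal ((∫ ω, g ω ∂ν + Λ) / (t + Λ)) := by
  have hmarkov := mul_meas_ge_le_integral_of_nonneg
    (Eventually.of_forall fun ω => neg_le_iff_add_nonneg.1 (hg ω))
    (hgi.add (integrable_const Λ)) (t + Λ)
  rw [integral_add hgi (integrable_const Λ)] at hmarkov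
  simp only [add_le_add_iff_right, integral_const, probReal_univ, smul_eq_mul, one_mul]
    at hmarkov
  rw [← ofReal_measureReal]
  refine ENNReal.ofReal_le_ofReal ((le_div_iff₀ ht).2 ?_)
  linarith

theorem integral_le_of_le_apply_coord {E : Type*} {K : ℕ} (i : Fin K) {F : (Fin K → Ω) → ℝ}
    {Y : (Fin K → Ω) → E} {Φ : E → Ω → ℝ} {ε : ℝ}
    (hY : ∀ ω c, Y (Function.update ω i c) = Y ω) (hF : Integrable F (Measure.pi fun _ => ν))
    (hΦ : ∀ y, Integrable (Φ y) ν) (hΦε : ∀ y, ∫ c, Φ y c ∂ν ≤ ε)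
    (hFΦ : ∀ ω, F ω ≤ Φ (Y ω) (ω i)) :
    ∫ ω, F ω ∂(Measure.pi fun _ => ν) ≤ ε := by
  obtain ⟨m, rfl⟩ : ∃ m, K = m + 1 := Nat.exists_eq_add_one_of_ne_zero i.pos.ne'
  obtain ⟨c₀⟩ := nonempty_of_isProbabilityMeasure ν
  set e := MeasurableEquiv.piFinSuccAbove (fun _ => Ω) i
  have he : MeasurePreserving e.symm (ν.prod (Measure.pi fun _ : Fin m => ν))
      (Measure.pi fun _ => ν) := (measurePreserving_piFinSuccAbove (fun _ => ν) i).symm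
  have hFe : Integrable (fun p => F (e.symm p)) (ν.prod (Measure.pi fun _ : Fin m => ν)) :=
    he.integrable_comp_of_integrable hF
  have hcoord : ∀ c r, e.symm (c, r) = Function.update (e.symm (c₀, r)) i c := fun c r => by
    simp [e, MeasurableEquiv.piFinSuccAbove_symm_apply, Fin.insertNthEquiv, Fin.update_insertNth]
  rw [← he.integral_comp' F, integral_prod_symm _ hFe]
  calc ∫ r, ∫ c, F (e.symm (c, r)) ∂ν ∂(Measure.pi fun _ : Fin m => ν)
      ≤ ∫ r, ε ∂(Measure.pi fun _ : Fin m => ν) := by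
        refine integral_mono_ae hFe.integral_prod_right (integrable_const ε) ?_
        filter_upwards [hFe.prod_left_ae] with r hr
        refine (integral_mono hr (hΦ (Y (e.symm (c₀, r)))) fun c => ?_).trans (hΦε _)
        simpa [hcoord c r, hY] using hFΦ (e.symm (c, r))
    _ = ε := by simp

theorem MeasureTheory.MemLp.comp_fst_sub_comp_snd {g : Ω → ℝ} (hg : MemLp g 2 ν) :
    MemLp (fun c : Ω × Ω => g c.1 - g c.2) 2 (ν.prod ν) :=
  (hg.comp_measurePreserving measurePreserving_fst).sub
    (hg.comp_measurePreserving measurePreserving_snd)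

theorem le_add_mul_of_forall_sub_le {u : ℕ → ℝ} {K : ℕ} {ε : ℝ}
    (h : ∀ j < K, u (j + 1) - u j ≤ ε) : ∀ j ≤ K, u j ≤ u 0 + j * ε := by
  intro j hj
  induction j with
  | zero => simp
  | succ j ih => push_cast; linarith [h j (by omega), ih (by omega)]

end Probability

section ModelBasedStep

variable {E S : Type*} [NormedAddCommGroup E]

noncomputable def modelGap (fmod : E → E → S → ℝ) (w : E → ℝ) (κ : ℝ) (x p : E) (s : S) : ℝ :=
  fmod x p s + w p - (fmod x x s + w x) + κ / 2 * ‖p - x‖ ^ 2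

/-- `c = (ξ, ξ')` is the pair of samples drawn in one step, and `β = √K`. -/
noncomputable def stepBound (fmod : E → E → S → ℝ) (w : E → ℝ) (Lip : E → S → ℝ) (prox : E → E)
    (κ τ ρ Lw α β : ℝ) (x : E) (c : S × S) : ℝ :=
  modelGap fmod w κ x (prox x) c.1 * (ρ / (ρ + τ + max (Lip x c.2) α * β))
    + 3 / 4 * ρ / (α * β) ^ 2 * (|Lip x c.1 - Lip x c.2| + (Lw + α)) ^ 2

theorem moreau_sub_le_stepBound [InnerProductSpace ℝ E] {fmod : E → E → S → ℝ} {w ψ moreau : E → ℝ}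
    {Lip : E → S → ℝ} {prox : E → E} {κ τ ρ Lw α β : ℝ}
    (hκ : 0 ≤ κ) (hτ : 0 ≤ τ) (hρ : 0 ≤ ρ) (hα : 0 < α) (hβ : 0 < β) (hLw : 0 ≤ Lw)
    (hw_weak : ConvexOn ℝ univ fun x => w x + κ / 2 * ‖x‖ ^ 2)
    (hw_lip : ∀ x y, |w x - w y| ≤ Lw * ‖x - y‖)
    (hmodel_conv : ∀ x s, ConvexOn ℝ univ fun y => fmod x y s)
    (hLip_nonneg : ∀ x s, 0 ≤ Lip x s)
    (hD1 : ∀ x y z s, fmod x z s - fmod x y s ≤ Lip x s * ‖z - y‖)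
    (hprox : ∀ x z, ψ (prox x) + ρ / 2 * ‖prox x - x‖ ^ 2 ≤ ψ z + ρ / 2 * ‖z - x‖ ^ 2)
    (hmoreau : ∀ x, moreau x = ψ (prox x) + ρ / 2 * ‖prox x - x‖ ^ 2)
    {x xp : E} {c : S × S}
    (hxp : ∀ y, fmod x xp c.1 + w xp + (ρ + τ + κ + max (Lip x c.2) α * β) / 2 * ‖xp - x‖ ^ 2
      ≤ fmod x y c.1 + w y + (ρ + τ + κ + max (Lip x c.2) α * β) / 2 * ‖y - x‖ ^ 2) :
    moreau xp - moreau x ≤ stepBound fmod w Lip prox κ τ ρ Lw α β x c := by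
  have hM : 0 < max (Lip x c.2) α * β := mul_pos (hα.trans_le (le_max_right _ _)) hβ
  have hh : ConvexOn ℝ univ fun y => fmod x y c.1 + w y + κ / 2 * ‖y‖ ^ 2 := by
    refine ((hmodel_conv x c.1).add hw_weak).congr fun y _ => ?_
    simp only [Pi.add_apply, add_assoc]
  have hL : fmod x x c.1 + w x - (fmod x xp c.1 + w xp) ≤ (Lip x c.1 + Lw) * ‖xp - x‖ := by
    have hf := hD1 x xp x c.1
    have hw := (le_abs_self _).trans (hw_lip x xp)
    rw [norm_sub_rev] at hf hw
    linarith
  have hstep := sq_norm_sub_le_of_isMinOn hκ hτ hρ hM hh (isMinOn_univ_iff.2 hxp) hL (prox x)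
  have hratio : ((Lip x c.1 + Lw) / (max (Lip x c.2) α * β)) ^ 2
      ≤ (|Lip x c.1 - Lip x c.2| + (Lw + α)) ^ 2 / (α * β) ^ 2 := by
    rw [← div_pow]
    exact pow_le_pow_left₀ (div_nonneg (add_nonneg (hLip_nonneg x c.1) hLw) hM.le)
      (div_max_mul_le hα hβ hLw) 2
  have henv := hprox xp (prox x)
  rw [← hmoreau xp] at henv
  rw [hmoreau x, stepBound, modelGap]
  have : 3 / 4 * ρ * ((Lip x c.1 + Lw) / (max (Lip x c.2) α * β)) ^ 2
      ≤ 3 / 4 * ρ / (α * β) ^ 2 * (|Lip x c.1 - Lip x c.2| + (Lw + α)) ^ 2 :=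
    calc _ ≤ 3 / 4 * ρ * ((|Lip x c.1 - Lip x c.2| + (Lw + α)) ^ 2 / (α * β) ^ 2) := by
          gcongr
      _ = _ := by ring
  linarith

variable [MeasurableSpace S] {μ : Measure S} [IsProbabilityMeasure μ]

theorem integrable_modelGap {fmod : E → E → S → ℝ} {x : E}
    (hmodel_int : ∀ y, Integrable (fun s => fmod x y s) μ) (w : E → ℝ) (κ : ℝ) (p : E) :
    Integrable (modelGap fmod w κ x p) μ :=
  (((hmodel_int p).add (integrable_const _)).sub
    ((hmodel_int x).add (integrable_const _))).add (integrable_const _)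

theorem integral_modelGap_nonpos {f w ψ : E → ℝ} {fmod : E → E → S → ℝ} {prox : E → E}
    {κ τ ρ : ℝ} (hρ : κ + τ ≤ ρ) (hψ : ∀ x, ψ x = f x + w x)
    (hmodel_int : ∀ x y, Integrable (fun s => fmod x y s) μ)
    (hmodel_center : ∀ x, ∫ s, fmod x x s ∂μ = f x)
    (hmodel_acc : ∀ x y, (∫ s, fmod x y s ∂μ) - f y ≤ τ / 2 * ‖x - y‖ ^ 2)
    (hprox : ∀ x z, ψ (prox x) + ρ / 2 * ‖prox x - x‖ ^ 2 ≤ ψ z + ρ / 2 * ‖z - x‖ ^ 2)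
    (x : E) : ∫ s, modelGap fmod w κ x (prox x) s ∂μ ≤ 0 := by
  have hgap : modelGap fmod w κ x (prox x) = fun s => fmod x (prox x) s - fmod x x s
      + (w (prox x) - w x + κ / 2 * ‖prox x - x‖ ^ 2) := by
    ext s; simp only [modelGap]; ring
  rw [hgap, integral_add (f := fun s => fmod x (prox x) s - fmod x x s)
      ((hmodel_int x _).sub (hmodel_int x x)) (integrable_const _),
    integral_sub (hmodel_int x _) (hmodel_int x x), hmodel_center, integral_const,
    probReal_univ, one_smul]
  have hacc := hmodel_acc x (prox x)
  have hmin := hprox x x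
  rw [norm_sub_rev] at hacc
  rw [hψ, hψ, sub_self, norm_zero] at hmin
  nlinarith [sq_nonneg ‖prox x - x‖]

theorem integrable_stepBound {fmod : E → E → S → ℝ} {w : E → ℝ} {Lip : E → S → ℝ}
    {prox : E → E} {κ τ ρ Lw α β : ℝ} (hτ : 0 ≤ τ) (hρ : 0 ≤ ρ) (hα : 0 < α) (hβ : 0 < β)
    {x : E} (hmodel_int : ∀ y, Integrable (fun s => fmod x y s) μ)
    (hLip : MemLp (Lip x) 2 μ) :
    Integrable (stepBound fmod w Lip prox κ τ ρ Lw α β x) (μ.prod μ) := by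
  have hvar : Integrable (fun c => (|Lip x c.1 - Lip x c.2| + (Lw + α)) ^ 2) (μ.prod μ) :=
    (hLip.comp_fst_sub_comp_snd.abs.add (memLp_const _)).integrable_sq
  exact ((integrable_modelGap hmodel_int w κ (prox x)).mul_prod
    (integrable_div_add_max_mul hLip.aemeasurable hρ hτ hα hβ)).add (hvar.const_mul _)

theorem integral_stepBound_le {f w ψ : E → ℝ} {fmod : E → E → S → ℝ} {Lip : E → S → ℝ}
    {prox : E → E} {κ τ ρ Lw σ α β : ℝ} (hτ : 0 ≤ τ) (hρ₀ : 0 ≤ ρ) (hρ : κ + τ ≤ ρ)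
    (hα : 0 < α) (hβ : 0 < β) (hLw : 0 ≤ Lw) (hσ : 0 ≤ σ) (hψ : ∀ x, ψ x = f x + w x)
    (hmodel_int : ∀ x y, Integrable (fun s => fmod x y s) μ)
    (hmodel_center : ∀ x, ∫ s, fmod x x s ∂μ = f x)
    (hmodel_acc : ∀ x y, (∫ s, fmod x y s ∂μ) - f y ≤ τ / 2 * ‖x - y‖ ^ 2)
    (hprox : ∀ x z, ψ (prox x) + ρ / 2 * ‖prox x - x‖ ^ 2 ≤ ψ z + ρ / 2 * ‖z - x‖ ^ 2)
    (hLip : ∀ x, MemLp (Lip x) 2 μ)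
    (hD2 : ∀ x, ∫ s, ∫ s', |Lip x s - Lip x s'| ^ 2 ∂μ ∂μ ≤ σ ^ 2) (x : E) :
    ∫ c, stepBound fmod w Lip prox κ τ ρ Lw α β x c ∂(μ.prod μ)
      ≤ 3 / 4 * ρ / (α * β) ^ 2 * (σ + (Lw + α)) ^ 2 := by
  have hdiff := (hLip x).comp_fst_sub_comp_snd
  have hvar : ∫ c, (Lip x c.1 - Lip x c.2) ^ 2 ∂(μ.prod μ) ≤ σ ^ 2 := by
    rw [integral_prod _ hdiff.integrable_sq]
    simpa only [sq_abs] using hD2 x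
  have hweight : 0 ≤ ∫ s', ρ / (ρ + τ + max (Lip x s') α * β) ∂μ :=
    integral_nonneg fun s' => by
      have : 0 < max (Lip x s') α := hα.trans_le (le_max_right _ _)
      positivity
  have hgap := integral_modelGap_nonpos hρ hψ hmodel_int hmodel_center hmodel_acc hprox x
  have hsq := integral_abs_add_sq_le hdiff (by positivity : 0 ≤ Lw + α) hσ hvar
  have hsqint : Integrable (fun c => (|Lip x c.1 - Lip x c.2| + (Lw + α)) ^ 2) (μ.prod μ) :=
    (hdiff.abs.add (memLp_const _)).integrable_sq
  simp only [stepBound]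
  rw [integral_add ((integrable_modelGap (hmodel_int x) w κ (prox x)).mul_prod
      (integrable_div_add_max_mul (hLip x).aemeasurable hρ₀ hτ hα hβ)) (hsqint.const_mul _),
    integral_prod_mul (modelGap fmod w κ x (prox x))
      (fun s' => ρ / (ρ + τ + max (Lip x s') α * β)), integral_const_mul]
  have hk : 0 ≤ 3 / 4 * ρ / (α * β) ^ 2 := by positivity
  linarith [mul_nonpos_of_nonpos_of_nonneg hgap hweight, mul_le_mul_of_nonneg_left hsq hk]

end ModelBasedStep

theorem tail_bound_unknown_lipschitz_general
    {n : ℕ} {S : Type*} [MeasurableSpace S] (μ : Measure S) [IsProbabilityMeasure μ]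
    (f w ψ : EuclideanSpace ℝ (Fin n) → ℝ)
    (fmod : EuclideanSpace ℝ (Fin n) → EuclideanSpace ℝ (Fin n) → S → ℝ)
    (Lip : EuclideanSpace ℝ (Fin n) → S → ℝ) (κ τ ρ Lw σ Λ α : ℝ) (B : ℝ → ℝ)
    (prox : EuclideanSpace ℝ (Fin n) → EuclideanSpace ℝ (Fin n))
    (moreau : EuclideanSpace ℝ (Fin n) → ℝ)
    -- basic parameter assumptions
    (hκ : 0 ≤ κ) (hτ : 0 ≤ τ) (hρ : κ + τ < ρ) (hα : 0 < α)
    (hLw : 0 ≤ Lw) (hσ : 0 ≤ σ)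
    -- composite objective
    (hψdef : ∀ x, ψ x = f x + w x)
    -- A2: `w` is κ-weakly convex and L_ω-Lipschitz
    (hw_weak : ConvexOn ℝ Set.univ (fun x => w x + κ / 2 * ‖x‖ ^ 2))
    (hw_lip : ∀ x y, |w x - w y| ≤ Lw * ‖x - y‖)
    -- A3: properties of the stochastic model
    (hmodel_conv : ∀ x s, ConvexOn ℝ Set.univ (fun y => fmod x y s))
    (hmodel_int : ∀ x y, Integrable (fun s => fmod x y s) μ)
    (hmodel_center : ∀ x, ∫ s, fmod x x s ∂μ = f x)
    (hmodel_acc : ∀ x y, (∫ s, fmod x y s ∂μ) - f y ≤ τ / 2 * ‖x - y‖ ^ 2)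
    -- D1: sample-dependent Lipschitz continuity
    (hLip_nonneg : ∀ x s, 0 ≤ Lip x s)
    (hLip_meas : ∀ x, Measurable (Lip x))
    (hD1 : ∀ x y z s, fmod x z s - fmod x y s ≤ Lip x s * ‖z - y‖)
    -- D2: reference Lipschitz continuity
    (hLip_sq_int : ∀ x, Integrable (fun s => Lip x s ^ 2) μ)
    (hD2 : ∀ x, ∫ s, ∫ s', |Lip x s - Lip x s'| ^ 2 ∂μ ∂μ ≤ σ ^ 2)
    -- Moreau envelope `ψ_{1/ρ}` and proximal mapping `prox = prox_{ψ/ρ}`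
    (hprox : ∀ x z, ψ (prox x) + ρ / 2 * ‖prox x - x‖ ^ 2 ≤ ψ z + ρ / 2 * ‖z - x‖ ^ 2)
    (hmoreau : ∀ x, moreau x = ψ (prox x) + ρ / 2 * ‖prox x - x‖ ^ 2)
    -- A6: lower bound on the Moreau envelope;  A7: bounded level sets
    (hΛ : 0 ≤ Λ) (hA6 : ∀ x, -Λ ≤ moreau x)
    (hA7 : ∀ v x, B v ≤ ‖x‖ → v ≤ moreau x)
    -- the algorithm with adaptive stepsize `γ_k = ρ + τ + κ + max{Lip(x^k,ξ'), α}√K`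
    (K : ℕ) (hK : 1 ≤ K)
    (X : ℕ → (Fin K → S × S) → EuclideanSpace ℝ (Fin n))
    (x1 : EuclideanSpace ℝ (Fin n)) (hX0 : ∀ ω, X 0 ω = x1)
    (hXadapt : ∀ k, ∀ ω ω' : Fin K → S × S,
      (∀ i : Fin K, (i : ℕ) < k → ω i = ω' i) → X k ω = X k ω')
    (hupdate : ∀ k (hk : k < K) (ω : Fin K → S × S) (y : EuclideanSpace ℝ (Fin n)),
      fmod (X k ω) (X (k + 1) ω) (ω ⟨k, hk⟩).1 + w (X (k + 1) ω)
          + (ρ + τ + κ + max (Lip (X k ω) (ω ⟨k, hk⟩).2) α * Real.sqrt K) / 2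
              * ‖X (k + 1) ω - X k ω‖ ^ 2
        ≤ fmod (X k ω) y (ω ⟨k, hk⟩).1 + w y
          + (ρ + τ + κ + max (Lip (X k ω) (ω ⟨k, hk⟩).2) α * Real.sqrt K) / 2
              * ‖y - X k ω‖ ^ 2)
    (hmint : ∀ k, Integrable (fun ω => moreau (X k ω))
      (Measure.pi fun _ : Fin K => μ.prod μ)) :
    ∀ a : ℝ, 0 < a → ∀ k : ℕ, 1 ≤ k → k < K →
      (Measure.pi fun _ : Fin K => μ.prod μ)
          {ω | B (a * (moreau x1 + Λ + ρ / α ^ 2 * (α + σ + Lw) ^ 2))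
                  + 4 * (α + σ + Lw) / (α * Real.sqrt K) ≤ ‖X k ω‖}
        ≤ ENNReal.ofReal (2 * (moreau x1 + Λ + ρ / α ^ 2 * (α + σ + Lw) ^ 2)
            / (a * (moreau x1 + Λ + ρ / α ^ 2 * (α + σ + Lw) ^ 2) + Λ)) := by
  intro a ha k _ hkK
  set P := Measure.pi fun _ : Fin K => μ.prod μ
  set Δ := moreau x1 + Λ + ρ / α ^ 2 * (α + σ + Lw) ^ 2
  set ε := 3 / 4 * ρ / (α * Real.sqrt K) ^ 2 * (σ + (Lw + α)) ^ 2
  have hρ₀ : 0 < ρ := by linarith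
  have hK₀ : (0 : ℝ) < K := by exact_mod_cast hK
  have hβ : 0 < Real.sqrt K := Real.sqrt_pos.2 hK₀
  have hLip : ∀ x, MemLp (Lip x) 2 μ := fun x =>
    (memLp_two_iff_integrable_sq (hLip_meas x).aestronglyMeasurable).2 (hLip_sq_int x)
  have hstep : ∀ j < K, ∫ ω, moreau (X (j + 1) ω) ∂P - ∫ ω, moreau (X j ω) ∂P ≤ ε := by
    intro j hj
    rw [← integral_sub (hmint _) (hmint _)]
    exact integral_le_of_le_apply_coord ⟨j, hj⟩ (Y := X j)
      (fun ω c => hXadapt j _ _ fun i hi => Function.update_of_ne (Fin.ne_of_val_ne hi.ne) _ _)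
      ((hmint _).sub (hmint _))
      (fun x => integrable_stepBound hτ hρ₀.le hα hβ (hmodel_int x) (hLip x))
      (integral_stepBound_le hτ hρ₀.le hρ.le hα hβ hLw hσ hψdef hmodel_int hmodel_center
        hmodel_acc hprox hLip hD2)
      fun ω => moreau_sub_le_stepBound hκ hτ hρ₀.le hα hβ hLw hw_weak hw_lip hmodel_conv
        hLip_nonneg hD1 hprox hmoreau (hupdate j hj ω)
  have hmean := le_add_mul_of_forall_sub_le (u := fun j => ∫ ω, moreau (X j ω) ∂P) hstep k hkK.le
  simp only [hX0, integral_const, probReal_univ, one_smul] at hmean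
  have hKε : K * ε = 3 / 4 * (ρ / α ^ 2 * (α + σ + Lw) ^ 2) := by
    simp only [ε]
    rw [mul_pow, Real.sq_sqrt hK₀.le]
    field_simp
    ring
  have hc : 0 < ρ / α ^ 2 * (α + σ + Lw) ^ 2 := by positivity
  have hΔ : 0 < Δ := by linarith [hA6 x1]
  calc P {ω | B (a * Δ) + 4 * (α + σ + Lw) / (α * Real.sqrt K) ≤ ‖X k ω‖}
      ≤ P {ω | a * Δ ≤ moreau (X k ω)} := measure_mono fun ω hω =>
        hA7 _ _ (le_trans (by simp only [le_add_iff_nonneg_right]; positivity) hω)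
    _ ≤ ENNReal.ofReal ((∫ ω, moreau (X k ω) ∂P + Λ) / (a * Δ + Λ)) :=
        meas_ge_le_ofReal_integral_add_div (fun ω => hA6 _) (hmint k) (by positivity)
    _ ≤ ENNReal.ofReal (2 * Δ / (a * Δ + Λ)) := by
        gcongr
        linarith [mul_le_mul_of_nonneg_right (Nat.cast_le.2 hkK.le) (by positivity : 0 ≤ ε)]

/-- **Lemma 3.5** (tail bound on the iterate norm under unknown Lipschitz continuity).
The algorithm is run for `K` steps on the product space `Fin K → S × S` carrying the
i.i.d. product of `μ ⊗ μ` (each coordinate is the pair `(ξ^k, ξ'^k)`): `X k`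
(representing `x^{k+1}`, `X 0 = x¹`) depends only on the first `k` coordinates and
`X (k+1)` minimizes the regularized model built at `X k` with sample `ξ^k`, with
adaptive stepsize `γ_k = ρ + τ + κ + max{Lip(x^k, ξ'), α}√K`.  Under A6, A7, for every
`a > 0` and every `2 ≤ k ≤ K`,
`P{‖x^k‖ ≥ B_{aΔ} + 4(α+σ+L_ω)/(α√K)} ≤ 2Δ/(aΔ + Λ)`, where
`Δ = ψ_{1/ρ}(x¹) + Λ + (ρ/α²)(α+σ+L_ω)²`. -/
theorem tail_bound_unknown_lipschitz
    {n : ℕ} {S : Type*} [MeasurableSpace S] (μ : Measure S) [IsProbabilityMeasure μ]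
    (f w ψ : EuclideanSpace ℝ (Fin n) → ℝ)
    (fmod : EuclideanSpace ℝ (Fin n) → EuclideanSpace ℝ (Fin n) → S → ℝ)
    (Lip : EuclideanSpace ℝ (Fin n) → S → ℝ) (κ τ ρ Lw σ Λ α : ℝ) (B : ℝ → ℝ)
    (prox : EuclideanSpace ℝ (Fin n) → EuclideanSpace ℝ (Fin n))
    (moreau : EuclideanSpace ℝ (Fin n) → ℝ)
    -- basic parameter assumptions
    (hκ : 0 ≤ κ) (hτ : 0 ≤ τ) (hρ : κ + τ < ρ) (hα : 0 < α)
    (hLw : 0 ≤ Lw) (hσ : 0 ≤ σ)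
    -- composite objective
    (hψdef : ∀ x, ψ x = f x + w x)
    -- A2: `w` is κ-weakly convex and L_ω-Lipschitz
    (hw_weak : ConvexOn ℝ Set.univ (fun x => w x + κ / 2 * ‖x‖ ^ 2))
    (hw_lip : ∀ x y, |w x - w y| ≤ Lw * ‖x - y‖)
    -- A3: properties of the stochastic model
    (hmodel_conv : ∀ x s, ConvexOn ℝ Set.univ (fun y => fmod x y s))
    (hmodel_int : ∀ x y, Integrable (fun s => fmod x y s) μ)
    (hmodel_center : ∀ x, ∫ s, fmod x x s ∂μ = f x)
    (hmodel_acc : ∀ x y, (∫ s, fmod x y s ∂μ) - f y ≤ τ / 2 * ‖x - y‖ ^ 2)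
    -- D1: sample-dependent Lipschitz continuity
    (hLip_nonneg : ∀ x s, 0 ≤ Lip x s)
    (hLip_meas : ∀ x, Measurable (Lip x))
    (hD1 : ∀ x y z s, fmod x z s - fmod x y s ≤ Lip x s * ‖z - y‖)
    -- D2: reference Lipschitz continuity
    (hLip_sq_int : ∀ x, Integrable (fun s => Lip x s ^ 2) μ)
    (hD2 : ∀ x, ∫ s, ∫ s', |Lip x s - Lip x s'| ^ 2 ∂μ ∂μ ≤ σ ^ 2)
    -- Moreau envelope `ψ_{1/ρ}` and proximal mapping `prox = prox_{ψ/ρ}`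
    (hprox : ∀ x z, ψ (prox x) + ρ / 2 * ‖prox x - x‖ ^ 2 ≤ ψ z + ρ / 2 * ‖z - x‖ ^ 2)
    (hmoreau : ∀ x, moreau x = ψ (prox x) + ρ / 2 * ‖prox x - x‖ ^ 2)
    -- A6: lower bound on the Moreau envelope;  A7: bounded level sets
    (hΛ : 0 ≤ Λ) (hA6 : ∀ x, -Λ ≤ moreau x)
    (hA7 : ∀ v x, B v ≤ ‖x‖ → v ≤ moreau x)
    -- the algorithm with adaptive stepsize `γ_k = ρ + τ + κ + max{Lip(x^k,ξ'), α}√K`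
    (K : ℕ) (hK : 1 ≤ K)
    (X : ℕ → (Fin K → S × S) → EuclideanSpace ℝ (Fin n))
    (x1 : EuclideanSpace ℝ (Fin n)) (hX0 : ∀ ω, X 0 ω = x1)
    (hXmeas : ∀ k, Measurable (X k))
    (hXadapt : ∀ k, ∀ ω ω' : Fin K → S × S,
      (∀ i : Fin K, (i : ℕ) < k → ω i = ω' i) → X k ω = X k ω')
    (hupdate : ∀ k (hk : k < K) (ω : Fin K → S × S) (y : EuclideanSpace ℝ (Fin n)),
      fmod (X k ω) (X (k + 1) ω) (ω ⟨k, hk⟩).1 + w (X (k + 1) ω)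
          + (ρ + τ + κ + max (Lip (X k ω) (ω ⟨k, hk⟩).2) α * Real.sqrt K) / 2
              * ‖X (k + 1) ω - X k ω‖ ^ 2
        ≤ fmod (X k ω) y (ω ⟨k, hk⟩).1 + w y
          + (ρ + τ + κ + max (Lip (X k ω) (ω ⟨k, hk⟩).2) α * Real.sqrt K) / 2
              * ‖y - X k ω‖ ^ 2)
    (hmint : ∀ k, Integrable (fun ω => moreau (X k ω))
      (Measure.pi fun _ : Fin K => μ.prod μ)) :
    ∀ a : ℝ, 0 < a → ∀ k : ℕ, 1 ≤ k → k < K →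
      (Measure.pi fun _ : Fin K => μ.prod μ)
          {ω | B (a * (moreau x1 + Λ + ρ / α ^ 2 * (α + σ + Lw) ^ 2))
                  + 4 * (α + σ + Lw) / (α * Real.sqrt K) ≤ ‖X k ω‖}
        ≤ ENNReal.ofReal (2 * (moreau x1 + Λ + ρ / α ^ 2 * (α + σ + Lw) ^ 2)
            / (a * (moreau x1 + Λ + ρ / α ^ 2 * (α + σ + Lw) ^ 2) + Λ)) :=
  tail_bound_unknown_lipschitz_general μ f w ψ fmod Lip κ τ ρ Lw σ Λ α B prox moreau hκ hτ hρ hα hLw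
    hσ hψdef hw_weak hw_lip hmodel_conv hmodel_int hmodel_center hmodel_acc hLip_nonneg hLip_meas
    hD1 hLip_sq_int hD2 hprox hmoreau hΛ hA6 hA7 K hK X x1 hX0 hXadapt hupdate hmint
end
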